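/- arXiv:1210.3048 — 2 statements merged into one kernel-verified Lean document; each statement's English description precedes it below -/
import Mathlib

section
/- Let X be a shift space over a finite alphabet 𝒜, let w ∈ B(X), and suppose X admits no non-trivial w-overlaps. Then X is flow equivalent to X^{w↦◇}, the shift space over 𝒜 ∪ {◇} obtained from X by replacing every occurrence of the word w by the single new symbol ◇ in every point of X (together with all shifts of the resulting sequences; this replacement is well defined because, in the absence of non-trivial w-overlaps, distinct occurrences of w in a point of X are disjoint). -/
namespace SymbolicDynamics

/-! ### Basic symbolic dynamics set-up

All shift spaces are realized inside the full shift over the countable ambient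
alphabet `ℕ`; an actual shift space uses only a finite subset of `ℕ` as its
alphabet.  This gives a uniform setting in which shift spaces over varying
finite alphabets can be compared (as required by flow equivalence). -/

/-- Biinfinite sequences over the ambient alphabet `ℕ`. -/
abbrev Seq : Type := ℤ → ℕ

/-- The shift map `σ`, `(σ x) i = x (i+1)`. -/
def shift (x : Seq) : Seq := fun i => x (i + 1)

/-- The word `x_i x_{i+1} ⋯ x_{i+n-1}` of length `n` occurring in `x` at position `i`. -/
def wordAt (x : Seq) (i : ℤ) (n : ℕ) : List ℕ :=
  List.ofFn fun k : Fin n => x (i + (k.val : ℤ))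

/-- `w` occurs as a factor of the biinfinite sequence `x`. -/
def FactorOf (w : List ℕ) (x : Seq) : Prop := ∃ i : ℤ, wordAt x i w.length = w

/-- The language `B(X)`: all finite words occurring in points of `X`. -/
def lang (X : Set Seq) : Set (List ℕ) := {w | ∃ x ∈ X, FactorOf w x}

/-- `X_F`: the set of biinfinite sequences containing no word of `F` as a factor. -/
def XF (F : Set (List ℕ)) : Set Seq := {x | ∀ w ∈ F, ¬ FactorOf w x}

/-- `X` is a shift space over the finite alphabet `A ⊆ ℕ`: `X` is a closed,
shift-invariant set of biinfinite sequences with letters in `A`. -/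
def IsSubshift (A : Set ℕ) (X : Set Seq) : Prop :=
  A.Finite ∧ IsClosed X ∧ (∀ x, x ∈ X ↔ shift x ∈ X) ∧ ∀ x ∈ X, ∀ i, x i ∈ A

/-- `X` is a shift space (over some finite alphabet). -/
def IsShiftSpace (X : Set Seq) : Prop := ∃ A : Set ℕ, IsSubshift A X

/-- A conjugacy between `X` and `Y`: a shift-commuting homeomorphism. -/
def Conjugate (X Y : Set Seq) : Prop :=
  ∃ φ : ↥X ≃ₜ ↥Y, ∀ x y : ↥X, shift x.1 = y.1 → shift (φ x).1 = (φ y).1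

/-- The (globally defined) map `φ` restricts to a conjugacy from `X` onto `Y`:
there is a shift-commuting homeomorphism `X → Y` whose underlying map is `φ`. -/
def ConjugacyVia (φ : Seq → Seq) (X Y : Set Seq) : Prop :=
  ∃ h : ↥X ≃ₜ ↥Y, (∀ x : ↥X, (h x).1 = φ x.1) ∧
    ∀ x y : ↥X, shift x.1 = y.1 → shift (h x).1 = (h y).1

/-- `y` is obtained from `x` by replacing every occurrence of the letter `a` by
`a ◇` (with `◇ = d`), possibly followed by one shift.  The reindexing function
`p` records the position in `y` of the `k`-th letter of `x`. -/
def ExpandsTo (a d : ℕ) (x y : Seq) : Prop :=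
  ∃ p : ℤ → ℤ, (p 0 = 0 ∨ p 0 = -1) ∧
    (∀ k, p (k + 1) = p k + if x k = a then 2 else 1) ∧
    (∀ k, y (p k) = x k) ∧
    ∀ k, x k = a → y (p k + 1) = d

/-- The symbol expansion `X^{a ↦ a◇}` with `◇ = d` (a symbol not in the alphabet
of `X`): all sequences obtained from points of `X` by replacing every
occurrence of `a` by `a◇`, together with all shifts of such sequences. -/
def symbolExpansion (X : Set Seq) (a d : ℕ) : Set Seq := {y | ∃ x ∈ X, ExpandsTo a d x y}

/-- Flow equivalence: the smallest equivalence relation on shift spaces (over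
varying finite alphabets) containing conjugacy and relating every shift space
`X` to its symbol expansion `X^{a ↦ a◇}` for every letter `a` of the alphabet of
`X` and every new symbol `◇` (Parry–Sullivan). -/
inductive FlowEquiv : Set Seq → Set Seq → Prop
  | of_conjugate {X Y : Set Seq} (hX : IsShiftSpace X) (hY : IsShiftSpace Y)
      (h : Conjugate X Y) : FlowEquiv X Y
  | expand {X : Set Seq} {A : Set ℕ} (a d : ℕ) (hX : IsSubshift A X)
      (ha : a ∈ A) (hd : d ∉ A) : FlowEquiv X (symbolExpansion X a d)
  | symm {X Y : Set Seq} : FlowEquiv X Y → FlowEquiv Y X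
  | trans {X Y Z : Set Seq} : FlowEquiv X Y → FlowEquiv Y Z → FlowEquiv X Z

/-- The full shift on `k` symbols (realized on the alphabet `{0, …, k-1}`). -/
def fullShift (k : ℕ) : Set Seq := {x | ∀ i, x i < k}

/-- `X` is a shift of finite type. -/
def IsSFT (X : Set Seq) : Prop := ∃ F : Set (List ℕ), F.Finite ∧ X = XF F

/-- `X` is an `n`-step shift of finite type:  `X = X_F` for a finite set `F` of
forbidden words of length `n+1`. -/
def IsNStepSFT (X : Set Seq) (n : ℕ) : Prop :=
  ∃ F : Set (List ℕ), F.Finite ∧ (∀ w ∈ F, w.length = n + 1) ∧ X = XF F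

/-- Irreducibility of a shift space. -/
def IsIrreducibleShift (X : Set Seq) : Prop :=
  ∀ u ∈ lang X, ∀ w ∈ lang X, ∃ v ∈ lang X, u ++ v ++ w ∈ lang X

/-- `v` is a `w`-overlap: there are positions `0 = k₁ < k₂ < ⋯ < k_m = |v| - |w|`
(0-based), consecutive ones less than `|w|` apart, such that `w` occurs in `v`
at each position `k_i`. -/
def IsOverlap (w v : List ℕ) : Prop :=
  w.length ≤ v.length ∧
  ∃ ks : List ℕ, ks ≠ [] ∧
    ks.Chain' (fun i j => i < j ∧ j < i + w.length) ∧
    ks.head? = some 0 ∧ ks.getLast? = some (v.length - w.length) ∧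
    ∀ i ∈ ks, (v.drop i).take w.length = w

/-- `y` is obtained from `x` by replacing every occurrence of the word `w` by
the single symbol `d`, followed by an arbitrary shift.  The reindexing function
`q` records the positions in `x` of the letters surviving in `y`: it advances by
`|w|` across each occurrence of `w` (which is replaced by `d`) and by `1`
elsewhere, and it reaches every occurrence of `w` in `x`. -/
def ContractsTo (w : List ℕ) (d : ℕ) (x y : Seq) : Prop :=
  ∃ q : ℤ → ℤ,
    (∀ j : ℤ, q (j + 1) = q j + if wordAt x (q j) w.length = w then (w.length : ℤ) else 1) ∧
    (∀ j : ℤ, y j = if wordAt x (q j) w.length = w then d else x (q j)) ∧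
    ∀ i : ℤ, wordAt x i w.length = w → ∃ j : ℤ, q j = i

/-- `X^{w ↦ ◇}` (with `◇ = d`): the shift space obtained from `X` by replacing
every occurrence of the word `w` by the single new symbol `d` in every point of
`X`, together with all shifts of the resulting sequences. -/
def wordReplace (X : Set Seq) (w : List ℕ) (d : ℕ) : Set Seq :=
  {y | ∃ x ∈ X, ContractsTo w d x y}


/-! Write `n = |w|` and choose fresh symbols `D 0 = ◇, D 1, …`. For `1 ≤ m ≤ n` let `X_m` be
obtained from `X` by replacing the first `m` letters of every occurrence of `w` by
`D 0, …, D (m - 1)` and deleting the other `n - m` letters, so that `X_1 = X^{w ↦ ◇}`. Without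
non-trivial `w`-overlaps the occurrences of `w` in a point of `X` are pairwise disjoint, and then:

* `X_n` is the image of `X` under a sliding block code with a one-block inverse, so `X ≅ X_n`;
* in `X_{m+1}` the letter `D m` occurs exactly after each `D (m - 1)`, and deleting it gives
  `X_m`; that is, `X_{m+1}` is the symbol expansion `X_m^{D (m-1) ↦ D (m-1) D m}`.

Hence `X ≅ X_n ∼ X_{n-1} ∼ ⋯ ∼ X_1`. -/

section IntegerWalks

lemma _root_.StrictMono.sub_le_sub_apply {p : ℤ → ℤ} (hp : StrictMono p) {j j' : ℤ}
    (h : j ≤ j') : j' - j ≤ p j' - p j := by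
  induction j', h using Int.leInduction with
  | base => simp
  | succ k _ ih => have := hp (lt_add_one k); omega

lemma _root_.StrictMono.exists_le_lt {p : ℤ → ℤ} (hp : StrictMono p) (t : ℤ) :
    ∃ k, p k ≤ t ∧ t < p (k + 1) := by
  have hbelow : ∃ k, p k ≤ t := by
    refine ⟨-|t - p 0|, ?_⟩
    have := hp.sub_le_sub_apply (neg_nonpos.2 (abs_nonneg (t - p 0)))
    grind
  have hbdd : ∃ b, ∀ k, p k ≤ t → k ≤ b := by
    refine ⟨|t - p 0|, fun k hk => ?_⟩
    by_contra! h
    have := hp.sub_le_sub_apply ((abs_nonneg (t - p 0)).trans h.le)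
    grind
  obtain ⟨k, hk, hmax⟩ := Int.exists_greatest_of_bdd hbdd hbelow
  exact ⟨k, hk, not_le.1 fun h => by have := hmax _ h; omega⟩

lemma sub_le_mul_of_step_le {q : ℤ → ℤ} {c : ℤ} (h : ∀ j, q (j + 1) - q j ≤ c) {j j' : ℤ}
    (hj : j ≤ j') : q j' - q j ≤ c * (j' - j) := by
  induction j', hj using Int.leInduction with
  | base => simp
  | succ k _ ih => have := h k; linarith

variable {p : ℤ → ℤ} {P : ℤ → Prop} [DecidablePred P]

lemma strictMono_of_step (hp : ∀ k, p (k + 1) = p k + if P k then 2 else 1) : StrictMono p :=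
  strictMono_int_of_lt_succ fun k => by rw [hp k]; split_ifs <;> omega

lemma exists_extend_of_step (hp : ∀ k, p (k + 1) = p k + if P k then 2 else 1) (q : ℤ → ℤ) :
    ∃ q' : ℤ → ℤ, (∀ j, q' (p j) = q j) ∧ (∀ j, P j → q' (p j + 1) = q j + 1) ∧
      ∀ t, (∃ j, p j = t) ∨ ∃ j, P j ∧ p j + 1 = t := by
  have hmono := strictMono_of_step hp
  choose κ hκ using hmono.exists_le_lt
  have hκ_eq : ∀ j t, p j ≤ t → t < p (j + 1) → κ t = j := fun j t h₁ h₂ => by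
    have := hmono.lt_iff_lt.1 ((hκ t).1.trans_lt h₂)
    have := hmono.lt_iff_lt.1 (h₁.trans_lt (hκ t).2)
    omega
  refine ⟨fun t => q (κ t) + (t - p (κ t)), fun j => ?_, fun j hj => ?_, fun t => ?_⟩
  · simp [hκ_eq j (p j) le_rfl (hmono (lt_add_one j))]
  · have h2 : p (j + 1) = p j + 2 := by rw [hp j, if_pos hj]
    simp only [hκ_eq j (p j + 1) (by omega) (by omega)]
    ring
  · obtain ⟨h₁, h₂⟩ := hκ t
    rcases h₁.eq_or_lt with h | h
    · exact Or.inl ⟨_, h⟩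
    · refine Or.inr ⟨κ t, by_contra fun hP => ?_, ?_⟩
      · rw [hp, if_neg hP] at h₂; omega
      · rw [hp] at h₂; split_ifs at h₂ <;> omega

/-- `t ↦ t + 1`, or `t ↦ t + 2` when this skips an `e`, permutes the positions not carrying `e`;
`p` is an orbit of this permutation. -/
lemma exists_walk_range_eq_setOf_ne {z : Seq} {a e : ℕ} (hae : a ≠ e)
    (hz : ∀ t, z t = a ↔ z (t + 1) = e) :
    ∃ p : ℤ → ℤ, (p 0 = 0 ∨ p 0 = -1) ∧ (∀ k, p (k + 1) = p k + if z (p k) = a then 2 else 1) ∧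
      Set.range p = {t | z t ≠ e} := by
  let σ : Equiv.Perm {t // z t ≠ e} :=
    { toFun := fun t => ⟨if z t = a then t + 2 else t + 1, by
        have := hz t; have := hz (t + 1); have := t.2; split_ifs <;> grind⟩
      invFun := fun t => ⟨if z (t - 1) = e then t - 2 else t - 1, by
        have := hz (t - 1); have := hz (t - 2); have := t.2; split_ifs <;> grind⟩
      left_inv := fun t => by
        have := hz t; have := t.2
        ext; dsimp only; split_ifs <;> grind
      right_inv := fun t => by
        have := hz (t - 1); have := hz (t - 2); have := t.2
        ext; dsimp only; split_ifs <;> grind }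
  have hσ : ∀ t, (σ t : ℤ) = t + if z t = a then 2 else 1 := fun t => by
    change (if z t = a then (t : ℤ) + 2 else t + 1) = _
    split_ifs <;> rfl
  let t₀ : {t // z t ≠ e} := if h : z 0 = e then
    ⟨-1, fun h' => hae (((hz (-1)).2 (by rwa [neg_add_cancel])).symm.trans h')⟩ else ⟨0, h⟩
  have hp : ∀ k : ℤ, ((σ ^ (k + 1)) t₀ : ℤ) = (σ ^ k) t₀ + if z ((σ ^ k) t₀) = a then 2 else 1 :=
    fun k => by rw [add_comm, zpow_add, zpow_one, Equiv.Perm.mul_apply, hσ]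
  refine ⟨fun k => (σ ^ k) t₀, ?_, hp, Set.Subset.antisymm ?_ fun t ht => ?_⟩
  · by_cases h : z 0 = e <;> simp [t₀, h]
  · rintro _ ⟨k, rfl⟩
    exact ((σ ^ k) t₀).2
  · obtain ⟨k, h₁, h₂⟩ := (strictMono_of_step (p := fun k => (σ ^ k) t₀)
      (P := fun k => z ((σ ^ k) t₀) = a) hp).exists_le_lt t
    refine ⟨k, h₁.antisymm (not_lt.1 fun hlt => ht ?_)⟩
    rw [hp] at h₂
    split_ifs at h₂ with h
    · rw [show t = (σ ^ k) t₀ + 1 by omega]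
      exact (hz _).1 h
    · omega

end IntegerWalks

section Topology

lemma _root_.Continuous.apply_int {α β : Type*} [TopologicalSpace α] [TopologicalSpace β]
    {F : α → ℤ → β} {G : α → ℤ} (hF : Continuous F) (hG : Continuous G) :
    Continuous fun a => F a (G a) := by
  refine continuous_iff_continuousAt.2 fun a => ?_
  have hlocal : ∀ᶠ b in nhds a, G b = G a :=
    hG.continuousAt.eventually_mem ((isOpen_discrete {G a}).mem_nhds rfl)
  refine (((continuous_apply (G a)).comp hF).continuousAt).congr ?_
  filter_upwards [hlocal] with b hb
  simp [hb]

lemma _root_.DependsOn.continuous_of_finite {ι α β : Type*} [TopologicalSpace α]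
    [DiscreteTopology α] [TopologicalSpace β] [Nonempty β] {f : (ι → α) → β} {s : Set ι}
    (hf : DependsOn f s) (hs : s.Finite) : Continuous f := by
  obtain ⟨g, rfl⟩ := dependsOn_iff_exists_comp.1 hf
  have := hs.to_subtype
  exact continuous_of_discreteTopology.comp (continuous_pi fun i => continuous_apply i.1)

lemma IsSubshift.isCompact {A : Set ℕ} {X : Set Seq} (hX : IsSubshift A X) : IsCompact X :=
  (isCompact_univ_pi fun _ => hX.1.isCompact).of_isClosed_subset hX.2.1
    fun x hx => Set.mem_univ_pi.2 (hX.2.2.2 x hx)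

lemma conjugate_image {X : Set Seq} {φ ψ : Seq → Seq} (hφ : Continuous φ) (hψ : Continuous ψ)
    (hψφ : ∀ x ∈ X, ψ (φ x) = x) (hφ_shift : ∀ x, φ (shift x) = shift (φ x)) :
    Conjugate X (φ '' X) := by
  have hψ_mem : ∀ y : φ '' X, ψ y ∈ X := by
    rintro ⟨_, x, hx, rfl⟩
    rwa [hψφ x hx]
  let e : X ≃ₜ φ '' X :=
    { toFun x := ⟨φ x, Set.mem_image_of_mem φ x.2⟩
      invFun y := ⟨ψ y, hψ_mem y⟩
      left_inv x := Subtype.ext (hψφ x x.2)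
      right_inv := by
        rintro ⟨_, x, hx, rfl⟩
        exact Subtype.ext (congrArg φ (hψφ x hx))
      continuous_toFun := (hφ.comp continuous_subtype_val).subtype_mk _
      continuous_invFun := (hψ.comp continuous_subtype_val).subtype_mk _ }
  refine ⟨e, fun x y hxy => ?_⟩
  change shift (φ x) = φ y
  rw [← hxy, hφ_shift]

end Topology

def shiftBy (c : ℤ) (x : Seq) : Seq := fun i => x (i + c)

lemma IsSubshift.shiftBy_mem {A : Set ℕ} {X : Set Seq} (hX : IsSubshift A X) {x : Seq}
    (hx : x ∈ X) (c : ℤ) : shiftBy c x ∈ X := by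
  induction c using Int.induction_on with
  | zero => convert hx using 1; funext i; simp [shiftBy]
  | succ c ih =>
    convert (hX.2.2.1 _).1 ih using 1
    funext i; simp only [shiftBy, shift]; ring_nf
  | pred c ih =>
    refine (hX.2.2.1 _).2 ?_
    convert ih using 1
    funext i; simp only [shiftBy, shift]; ring_nf

abbrev Occurs (w : List ℕ) (x : Seq) (i : ℤ) : Prop := wordAt x i w.length = w

section Occurrences

variable {w : List ℕ} {x x' : Seq} {i : ℤ}

lemma occurs_iff : Occurs w x i ↔ (fun k : Fin w.length => x (i + k)) = w.get := by
  rw [← List.ofFn_inj, List.ofFn_get]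
  rfl

lemma Occurs.apply (h : Occurs w x i) (k : Fin w.length) : x (i + k) = w.get k :=
  congrFun (occurs_iff.1 h) k

lemma occurs_shiftBy (c : ℤ) : Occurs w (shiftBy c x) i ↔ Occurs w x (i + c) := by
  simp only [occurs_iff, shiftBy, add_right_comm]

lemma occurs_congr (h : ∀ k : Fin w.length, x (i + k) = x' (i + k)) :
    Occurs w x i ↔ Occurs w x' i := by
  simp only [occurs_iff, funext h]

lemma isClopen_setOf_occurs {α : Type*} [TopologicalSpace α] (w : List ℕ) {F : α → Seq}
    {G : α → ℤ} (hF : Continuous F) (hG : Continuous G) : IsClopen {a | Occurs w (F a) (G a)} := by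
  simp only [occurs_iff]
  exact (isClopen_discrete {w.get}).preimage
    (continuous_pi fun k => hF.apply_int (hG.add continuous_const))

lemma wordAt_take (x : Seq) (i : ℤ) (m k : ℕ) :
    (wordAt x i m).take k = wordAt x i (min k m) :=
  List.ext_getElem (by simp [wordAt]) fun j _ _ => by simp [wordAt]

lemma wordAt_drop (x : Seq) (i : ℤ) (m k : ℕ) :
    (wordAt x i m).drop k = wordAt x (i + k) (m - k) :=
  List.ext_getElem (by simp [wordAt]) fun j _ _ => by simp [wordAt, add_assoc]

def OccursDisjointly (w : List ℕ) (x : Seq) : Prop :=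
  ∀ ⦃i i'⦄, Occurs w x i → Occurs w x i' → i < i' → i + w.length ≤ i'

lemma OccursDisjointly.eq (hx : OccursDisjointly w x) {i i' : ℤ} (h : Occurs w x i)
    (h' : Occurs w x i') (h₁ : i < i' + w.length) (h₂ : i' < i + w.length) : i = i' := by
  rcases lt_trichotomy i i' with hlt | heq | hgt
  · have := hx h h' hlt; omega
  · exact heq
  · have := hx h' h hgt; omega

/-- Occurrences at `i < i + δ` with `δ < |w|` give the non-trivial `w`-overlap
`x_i ⋯ x_{i+δ+|w|-1}`, with positions `[0, δ]`. -/
lemma occursDisjointly_of_forall_isOverlap {X : Set Seq}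
    (hov : ∀ v ∈ lang X, IsOverlap w v → v = w) (hx : x ∈ X) : OccursDisjointly w x := by
  intro i i' h h' hlt
  by_contra! hclose
  obtain ⟨δ, rfl⟩ : ∃ δ : ℕ, i' = i + δ := ⟨(i' - i).toNat, by omega⟩
  have hv : wordAt x i (w.length + δ) ∈ lang X := ⟨x, hx, i, by simp [wordAt]⟩
  have hover : IsOverlap w (wordAt x i (w.length + δ)) := by
    refine ⟨by simp [wordAt], [0, δ], by simp, ?_, by simp, by simp [wordAt], ?_⟩
    · show List.IsChain _ [0, δ]
      simp only [List.isChain_cons_cons, List.isChain_singleton, and_true]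
      omega
    simp only [List.mem_cons, List.not_mem_nil, or_false]
    rintro j (rfl | rfl)
    · simpa [wordAt_take] using h
    · simpa [wordAt_drop, wordAt_take] using h'
  have := congrArg List.length (hov _ hv hover)
  simp [wordAt] at this
  omega

end Occurrences

open Classical in
/-- Replaces the first `m` letters of every occurrence of `w` in `x` by `D 0, …, D (m - 1)`.
The offset is an infimum only to make the definition total; it is unique when the occurrences are
disjoint and `m ≤ |w|`. -/
noncomputable def relabel (w : List ℕ) (D : ℕ → ℕ) (m : ℕ) (x : Seq) : Seq := fun i =>
  if {k | k < m ∧ Occurs w x (i - k)}.Nonempty then D (sInf {k | k < m ∧ Occurs w x (i - k)})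
  else x i

noncomputable def unlabel (w : List ℕ) (D : ℕ → ℕ) (a : ℕ) : ℕ :=
  open Classical in if a ∈ Set.range D then w.getD (Function.invFun D a) 0 else a

section Relabel

variable {w : List ℕ} {D : ℕ → ℕ} {m k : ℕ} {x : Seq} {i : ℤ}

lemma relabel_of_forall_not (h : ∀ k < m, ¬ Occurs w x (i - k)) : relabel w D m x i = x i := by
  rw [relabel, if_neg]
  rintro ⟨k, hk, hocc⟩
  exact h k hk hocc

lemma relabel_of_occurs (hx : OccursDisjointly w x) (hmn : m ≤ w.length) (hk : k < m)
    (h : Occurs w x (i - k)) : relabel w D m x i = D k := by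
  have hne : {k | k < m ∧ Occurs w x (i - k)}.Nonempty := ⟨k, hk, h⟩
  rw [relabel, if_pos hne]
  obtain ⟨hlt, hocc⟩ := Nat.sInf_mem hne
  have := hx.eq hocc h (by omega) (by omega)
  rw [show sInf {k | k < m ∧ Occurs w x (i - k)} = k by omega]

lemma relabel_eq_iff (hx : OccursDisjointly w x) (hxD : ∀ i k, x i ≠ D k)
    (hD : Function.Injective D) (hmn : m ≤ w.length) (hk : k < m) :
    relabel w D m x i = D k ↔ Occurs w x (i - k) := by
  refine ⟨fun h => ?_, relabel_of_occurs hx hmn hk⟩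
  by_cases hocc : ∃ k' < m, Occurs w x (i - k')
  · obtain ⟨k', hk', hocc'⟩ := hocc
    rw [relabel_of_occurs hx hmn hk' hocc', hD.eq_iff] at h
    rwa [← h]
  · simp only [not_exists, not_and] at hocc
    exact absurd (relabel_of_forall_not hocc ▸ h) (hxD i k)

lemma relabel_eq_pred_iff (hx : OccursDisjointly w x) (hxD : ∀ i k, x i ≠ D k)
    (hD : Function.Injective D) {m' : ℕ} (hm : 1 ≤ m) (hmm' : m ≤ m') (hm'n : m' ≤ w.length) :
    relabel w D m' x i = D (m - 1) ↔ Occurs w x (i - (m - 1)) := by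
  rw [show (m : ℤ) - 1 = ((m - 1 : ℕ) : ℤ) by omega]
  exact relabel_eq_iff hx hxD hD hm'n (by omega)

lemma relabel_succ (h : ¬ Occurs w x (i - m)) : relabel w D (m + 1) x i = relabel w D m x i := by
  have hset : {k | k < m + 1 ∧ Occurs w x (i - k)} = {k | k < m ∧ Occurs w x (i - k)} := by
    ext k
    refine ⟨fun ⟨hk, hocc⟩ => ⟨?_, hocc⟩, fun ⟨hk, hocc⟩ => ⟨by omega, hocc⟩⟩
    rcases Nat.lt_succ_iff_lt_or_eq.1 hk with hk | rfl
    exacts [hk, absurd hocc h]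
  simp only [relabel]
  rw [hset]

lemma relabel_mem {A : Set ℕ} (hxA : ∀ i, x i ∈ A) : relabel w D m x i ∈ A ∪ D '' Set.Iio m := by
  by_cases hne : {k | k < m ∧ Occurs w x (i - k)}.Nonempty
  · rw [relabel, if_pos hne]
    exact Or.inr ⟨_, (Nat.sInf_mem hne).1, rfl⟩
  · rw [relabel, if_neg hne]
    exact Or.inl (hxA i)

lemma relabel_shiftBy (c : ℤ) : relabel w D m (shiftBy c x) i = relabel w D m x (i + c) := by
  have hset : {k | k < m ∧ Occurs w (shiftBy c x) (i - k)} =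
      {k | k < m ∧ Occurs w x (i + c - k)} := by
    ext k
    simp only [Set.mem_ofPred_eq, occurs_shiftBy, sub_add_eq_add_sub]
  simp only [relabel]
  rw [hset]
  rfl

lemma continuous_relabel : Continuous (relabel w D m) := by
  refine continuous_pi fun i => DependsOn.continuous_of_finite (s := Set.Icc (i - m) (i + w.length))
    (fun x x' hxx' => ?_) (Set.finite_Icc _ _)
  have hocc : ∀ k, k < m → (Occurs w x (i - k) ↔ Occurs w x' (i - k)) := fun k hk =>
    occurs_congr fun l => hxx' _ ⟨by omega, by have := l.2; omega⟩
  have hset : {k | k < m ∧ Occurs w x (i - k)} = {k | k < m ∧ Occurs w x' (i - k)} :=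
    Set.ext fun k => and_congr_right (hocc k)
  have hi : x i = x' i := hxx' i ⟨by omega, by omega⟩
  simp only [relabel]
  rw [hset, hi]

lemma relabel_one : relabel w D 1 x i = if Occurs w x i then D 0 else x i := by
  split_ifs with h
  · have hne : {k : ℕ | k < 1 ∧ Occurs w x (i - k)}.Nonempty := ⟨0, zero_lt_one, by simpa using h⟩
    rw [relabel, if_pos hne, Nat.lt_one_iff.1 (Nat.sInf_mem hne).1]
  · exact relabel_of_forall_not fun k hk => by simpa [Nat.lt_one_iff.1 hk] using h

lemma unlabel_relabel (hx : OccursDisjointly w x) (hxD : ∀ i k, x i ≠ D k)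
    (hD : Function.Injective D) (i : ℤ) : unlabel w D (relabel w D w.length x i) = x i := by
  by_cases h : ∃ k < w.length, Occurs w x (i - k)
  · obtain ⟨k, hk, hocc⟩ := h
    rw [relabel_of_occurs hx le_rfl hk hocc, unlabel, if_pos ⟨k, rfl⟩,
      Function.leftInverse_invFun hD k, List.getD_eq_getElem _ _ hk]
    simpa using (hocc.apply ⟨k, hk⟩).symm
  · simp only [not_exists, not_and] at h
    rw [relabel_of_forall_not h, unlabel, if_neg]
    rintro ⟨k, hk⟩
    exact hxD i k hk.symm

end Relabel

/-- `q j` is the position of `x` read at position `j` of the image: the walk advances by one,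
except at the `m`-th letter of an occurrence of `w`, from where it jumps past the occurrence. -/
structure IsReplacementWalk (w : List ℕ) (m : ℕ) (x : Seq) (q : ℤ → ℤ) : Prop where
  step : ∀ j, q (j + 1) = q j + if Occurs w x (q j - (m - 1)) then (w.length : ℤ) - m + 1 else 1
  hits : ∀ i, Occurs w x i → ∃ j, q j = i

/-- The shift `X_m` of the header. -/
def blockReplace (X : Set Seq) (w : List ℕ) (D : ℕ → ℕ) (m : ℕ) : Set Seq :=
  {y | ∃ x ∈ X, ∃ q, IsReplacementWalk w m x q ∧ y = relabel w D m x ∘ q}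

namespace IsReplacementWalk

variable {w : List ℕ} {m : ℕ} {x : Seq} {q : ℤ → ℤ}

lemma step_of_occurs (hq : IsReplacementWalk w m x q) {j : ℤ} (h : Occurs w x (q j - (m - 1))) :
    q (j + 1) = q j + ((w.length : ℤ) - m + 1) := by
  rw [hq.step, if_pos h]

lemma step_of_not_occurs (hq : IsReplacementWalk w m x q) {j : ℤ}
    (h : ¬ Occurs w x (q j - (m - 1))) : q (j + 1) = q j + 1 := by
  rw [hq.step, if_neg h]

lemma strictMono (hq : IsReplacementWalk w m x q) (hmn : m ≤ w.length) : StrictMono q :=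
  strictMono_int_of_lt_succ fun j => by rw [hq.step]; split_ifs <;> omega

lemma step_le (hq : IsReplacementWalk w m x q) (hm : 1 ≤ m) (hmn : m ≤ w.length) (j : ℤ) :
    q (j + 1) - q j ≤ w.length := by
  rw [hq.step]; split_ifs <;> omega

lemma comp_add_const (hq : IsReplacementWalk w m x q) (c : ℤ) :
    IsReplacementWalk w m x fun j => q (j + c) where
  step j := by rw [add_right_comm, hq.step]
  hits i hi := by
    obtain ⟨j, rfl⟩ := hq.hits i hi
    exact ⟨j - c, by simp⟩

lemma shiftBy (hq : IsReplacementWalk w m x q) (c : ℤ) :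
    IsReplacementWalk w m (SymbolicDynamics.shiftBy c x) fun j => q j - c where
  step j := by simp only [occurs_shiftBy, hq.step j, sub_add_cancel, sub_right_comm _ c]; ring
  hits i hi := by
    obtain ⟨j, hj⟩ := hq.hits (i + c) ((occurs_shiftBy c).1 hi)
    exact ⟨j, by omega⟩

/-- Disjointness of the occurrences forbids a jump inside the block `o, …, o + m - 1`. -/
lemma exists_block (hq : IsReplacementWalk w m x q) (hx : OccursDisjointly w x) (hm : 1 ≤ m)
    (hmn : m ≤ w.length) {o : ℤ} (ho : Occurs w x o) :
    ∃ j, q (j + (m - 1)) = o + (m - 1) ∧ q (j + m) = o + w.length := by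
  obtain ⟨j, hj⟩ := hq.hits o ho
  have hblock : ∀ k : ℕ, k < m → q (j + k) = o + k := by
    intro k hk
    induction k with
    | zero => simpa using hj
    | succ k ih =>
      have hnot : ¬ Occurs w x (q (j + k) - (m - 1)) := fun h => by
        have := hx.eq ho h (by grind) (by grind)
        grind
      push_cast
      rw [← add_assoc, hq.step_of_not_occurs hnot, ih (by omega), add_assoc]
  have hlast := hblock (m - 1) (by omega)
  rw [Nat.cast_sub hm, Nat.cast_one] at hlast
  refine ⟨j, hlast, ?_⟩
  have hjump := hq.step_of_occurs (j := j + (m - 1)) (by rw [hlast]; simpa using ho)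
  rw [hlast, add_assoc, sub_add_cancel] at hjump
  rw [hjump]
  ring

lemma apply_notMem_Ico (hq : IsReplacementWalk w m x q) (hx : OccursDisjointly w x) (hm : 1 ≤ m)
    (hmn : m ≤ w.length) {o : ℤ} (ho : Occurs w x o) (j : ℤ) :
    q j ∉ Set.Ico (o + m) (o + w.length) := by
  rintro ⟨h₁, h₂⟩
  obtain ⟨j₀, hlast, hjump⟩ := hq.exists_block hx hm hmn ho
  have hmono := hq.strictMono hmn
  have := hmono.lt_iff_lt.1 (show q (j₀ + (m - 1)) < q j by omega)
  have := hmono.lt_iff_lt.1 (show q j < q (j₀ + m) by omega)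
  omega

lemma not_occurs_sub (hq : IsReplacementWalk w m x q) (hx : OccursDisjointly w x) (hm : 1 ≤ m)
    (hmn : m < w.length) (j : ℤ) : ¬ Occurs w x (q j - m) := fun h =>
  hq.apply_notMem_Ico hx hm hmn.le h j ⟨by omega, by omega⟩

lemma abs_le (hq : IsReplacementWalk w m x q) (hm : 1 ≤ m) (hmn : m ≤ w.length) (hq0 : q 0 = 0)
    (j : ℤ) : |j| ≤ |q j| ∧ |q j| ≤ w.length * |j| := by
  have hmono := hq.strictMono hmn
  have hstep := hq.step_le hm hmn
  rcases le_total 0 j with hj | hj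
  · have := hmono.sub_le_sub_apply hj
    have := sub_le_mul_of_step_le hstep hj
    rw [abs_of_nonneg hj, abs_of_nonneg (by omega)]
    constructor <;> linarith
  · have := hmono.sub_le_sub_apply hj
    have := sub_le_mul_of_step_le hstep hj
    rw [abs_of_nonpos hj, abs_of_nonpos (by omega)]
    constructor <;> linarith

lemma succ_step_of_not_occurs (hq : IsReplacementWalk w (m + 1) x q) {j : ℤ}
    (h : ¬ Occurs w x (q j - m)) : q (j + 1) = q j + 1 :=
  hq.step_of_not_occurs (by push_cast; rwa [add_sub_cancel_right])

lemma succ_step_of_occurs (hq : IsReplacementWalk w (m + 1) x q) {j : ℤ}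
    (h : Occurs w x (q j - m)) : q (j + 1) = q j + (w.length - m) := by
  rw [hq.step_of_occurs (by push_cast; rwa [add_sub_cancel_right])]
  push_cast
  ring

/-- In `X_{m+1}`, `D (m - 1)` is read at `j` exactly when `D m` is read at `j + 1`. -/
lemma occurs_iff_occurs_succ (hq : IsReplacementWalk w (m + 1) x q) (hx : OccursDisjointly w x)
    (hm : 1 ≤ m) (hmn : m < w.length) (j : ℤ) :
    Occurs w x (q j - (m - 1)) ↔ Occurs w x (q (j + 1) - m) := by
  constructor
  · intro h
    have hnot : ¬ Occurs w x (q j - m) := fun h' => by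
      have := hx.eq h h' (by omega) (by omega); omega
    rwa [hq.succ_step_of_not_occurs hnot, add_sub_right_comm, sub_add]
  · intro h
    by_cases h' : Occurs w x (q j - m)
    · rw [hq.succ_step_of_occurs h'] at h
      have := hx.eq h h' (by omega) (by omega)
      omega
    · rwa [hq.succ_step_of_not_occurs h', add_sub_right_comm, sub_add] at h

end IsReplacementWalk

section BlockReplace

variable {A : Set ℕ} {X : Set Seq} {w : List ℕ} {D : ℕ → ℕ} {m : ℕ}

lemma isClosed_setOf_isReplacementWalk_bounded (hXc : IsClosed X) :
    IsClosed {v : Seq × (ℤ → ℤ) | v.1 ∈ X ∧ v.2 0 = 0 ∧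
      (∀ j, v.2 (j + 1) = v.2 j +
        if Occurs w v.1 (v.2 j - (m - 1)) then (w.length : ℤ) - m + 1 else 1) ∧
      ∀ i, Occurs w v.1 i → ∃ j ∈ Finset.Icc (-|i|) |i|, v.2 j = i} := by
  have hq : ∀ j, Continuous fun v : Seq × (ℤ → ℤ) => v.2 j :=
    fun j => (continuous_apply j).comp continuous_snd
  simp only [Set.ofPred_and, Set.ofPred_forall]
  refine (hXc.preimage continuous_fst).inter ((isClosed_eq (hq 0) continuous_const).inter
    ((isClosed_iInter fun j => ?_).inter (isClosed_iInter fun i => ?_)))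
  · have hocc : IsClopen {v : Seq × (ℤ → ℤ) | Occurs w v.1 (v.2 j - (m - 1))} :=
      isClopen_setOf_occurs w continuous_fst ((hq j).sub continuous_const)
    exact isClosed_eq (hq _) ((hq j).add
      (Continuous.if (by simp [hocc.frontier_eq]) continuous_const continuous_const))
  · have hhit : {v : Seq × (ℤ → ℤ) | ∃ j ∈ Finset.Icc (-|i|) |i|, v.2 j = i} =
        ⋃ j ∈ Finset.Icc (-|i|) |i|, {v | v.2 j = i} := by
      ext; simp
    refine isClosed_imp (isClopen_setOf_occurs w continuous_fst continuous_const).isOpen ?_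
    rw [hhit]
    exact isClosed_biUnion_finset fun j _ => isClosed_eq (hq j) continuous_const

/-- Normalized by `q 0 = 0`, walks satisfy `|q j| ≤ |w| |j|`, and `q j = i` forces `|j| ≤ |i|`,
which turns `hits` into a closed condition. -/
lemma isCompact_setOf_isReplacementWalk (hXc : IsCompact X) (hm : 1 ≤ m) (hmn : m ≤ w.length) :
    IsCompact {v : Seq × (ℤ → ℤ) | v.1 ∈ X ∧ v.2 0 = 0 ∧ IsReplacementWalk w m v.1 v.2} := by
  have hK : IsCompact (Set.univ.pi fun j : ℤ => Set.Icc (-(w.length * |j|)) (w.length * |j|)) :=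
    isCompact_univ_pi fun j => (Set.finite_Icc _ _).isCompact
  refine (hXc.prod hK).of_isClosed_subset ?_ ?_
  · convert isClosed_setOf_isReplacementWalk_bounded (w := w) (m := m) hXc.isClosed using 1
    ext ⟨x, q⟩
    constructor
    · rintro ⟨hx, hq0, hq⟩
      refine ⟨hx, hq0, hq.step, fun i hi => ?_⟩
      obtain ⟨j, rfl⟩ := hq.hits i hi
      exact ⟨j, Finset.mem_Icc.2 (abs_le.1 (hq.abs_le hm hmn hq0 j).1), rfl⟩
    · rintro ⟨hx, hq0, hstep, hhits⟩
      exact ⟨hx, hq0, hstep, fun i hi => (hhits i hi).imp fun j hj => hj.2⟩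
  · rintro ⟨x, q⟩ ⟨hx, hq0, hq⟩
    exact ⟨hx, fun j _ => abs_le.1 (hq.abs_le hm hmn hq0 j).2⟩

lemma blockReplace_eq_image (hX : IsSubshift A X) :
    blockReplace X w D m = (fun v : Seq × (ℤ → ℤ) => relabel w D m v.1 ∘ v.2) ''
      {v | v.1 ∈ X ∧ v.2 0 = 0 ∧ IsReplacementWalk w m v.1 v.2} := by
  ext y
  constructor
  · rintro ⟨x, hx, q, hq, rfl⟩
    refine ⟨(shiftBy (q 0) x, fun j => q j - q 0), ⟨hX.shiftBy_mem hx _, sub_self _,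
      hq.shiftBy _⟩, funext fun j => ?_⟩
    simp [relabel_shiftBy]
  · rintro ⟨⟨x, q⟩, ⟨hx, -, hq⟩, rfl⟩
    exact ⟨x, hx, q, hq, rfl⟩

lemma isSubshift_blockReplace (hX : IsSubshift A X) (hm : 1 ≤ m) (hmn : m ≤ w.length) :
    IsSubshift (A ∪ D '' Set.Iio m) (blockReplace X w D m) := by
  refine ⟨hX.1.union ((Set.finite_Iio m).image D), ?_, fun y => ⟨?_, ?_⟩, ?_⟩
  · rw [blockReplace_eq_image hX]
    refine ((isCompact_setOf_isReplacementWalk hX.isCompact hm hmn).image ?_).isClosed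
    exact continuous_pi fun j =>
      (continuous_relabel.comp continuous_fst).apply_int ((continuous_apply j).comp continuous_snd)
  · rintro ⟨x, hx, q, hq, rfl⟩
    exact ⟨x, hx, _, hq.comp_add_const 1, rfl⟩
  · rintro ⟨x, hx, q, hq, hy⟩
    refine ⟨x, hx, _, hq.comp_add_const (-1), funext fun j => ?_⟩
    simpa [shift, ← sub_eq_add_neg] using congrFun hy (j - 1)
  · rintro _ ⟨x, hx, q, hq, rfl⟩ j
    exact relabel_mem (hX.2.2.2 x hx)

end BlockReplace

section Expansion

variable {X : Set Seq} {w : List ℕ} {D : ℕ → ℕ} {m : ℕ}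

lemma symbolExpansion_blockReplace_subset (hXdisj : ∀ x ∈ X, OccursDisjointly w x)
    (hXD : ∀ x ∈ X, ∀ i k, x i ≠ D k) (hD : Function.Injective D) (hm : 1 ≤ m)
    (hmn : m < w.length) :
    symbolExpansion (blockReplace X w D m) (D (m - 1)) (D m) ⊆ blockReplace X w D (m + 1) := by
  rintro z ⟨_, ⟨x, hx, q, hq, rfl⟩, p, -, hpstep, hpz, hpe⟩
  simp only [Function.comp_apply] at hpstep hpz hpe
  have hxdisj := hXdisj x hx
  have hpred : ∀ j, relabel w D m x (q j) = D (m - 1) ↔ Occurs w x (q j - (m - 1)) := fun j =>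
    relabel_eq_pred_iff hxdisj (hXD x hx) hD hm le_rfl hmn.le
  have ha : ∀ j, relabel w D m x (q j) = D (m - 1) → Occurs w x (q j + 1 - m) := fun j h => by
    rw [add_sub_right_comm, sub_add]
    exact (hpred j).1 h
  have hgap := hq.not_occurs_sub hxdisj hm hmn
  obtain ⟨q', hq'p, hq'p1, hcover⟩ := exists_extend_of_step hpstep q
  refine ⟨x, hx, q', ⟨fun t => ?_, fun i hi => ?_⟩,
    funext fun t => show z t = relabel w D (m + 1) x (q' t) from ?_⟩
  · push_cast
    rw [add_sub_cancel_right, show (w.length : ℤ) - (m + 1) + 1 = w.length - m by ring]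
    rcases hcover t with ⟨j, rfl⟩ | ⟨j, hj, rfl⟩
    · rw [hq'p, if_neg (hgap j)]
      by_cases hj : relabel w D m x (q j) = D (m - 1)
      · exact hq'p1 j hj
      · rw [← hq.step_of_not_occurs ((hpred j).not.1 hj), ← hq'p, hpstep, if_neg hj]
    · have hp2 : p j + 1 + 1 = p (j + 1) := by rw [hpstep, if_pos hj]; ring
      rw [hq'p1 j hj, if_pos (ha j hj), hp2, hq'p, hq.step_of_occurs ((hpred j).1 hj)]
      ring
  · obtain ⟨j, rfl⟩ := hq.hits i hi
    exact ⟨p j, hq'p j⟩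
  · rcases hcover t with ⟨j, rfl⟩ | ⟨j, hj, rfl⟩
    · rw [hpz, hq'p, relabel_succ (hgap j)]
    · rw [hpe j hj, hq'p1 j hj, relabel_of_occurs hxdisj hmn (lt_add_one m) (ha j hj)]

lemma blockReplace_succ_subset (hXdisj : ∀ x ∈ X, OccursDisjointly w x)
    (hXD : ∀ x ∈ X, ∀ i k, x i ≠ D k) (hD : Function.Injective D) (hm : 1 ≤ m)
    (hmn : m < w.length) :
    blockReplace X w D (m + 1) ⊆ symbolExpansion (blockReplace X w D m) (D (m - 1)) (D m) := by
  rintro _ ⟨x, hx, q, hq, rfl⟩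
  set z := relabel w D (m + 1) x ∘ q
  have hxdisj := hXdisj x hx
  have he : ∀ t, z t = D m ↔ Occurs w x (q t - m) := fun t =>
    relabel_eq_iff hxdisj (hXD x hx) hD hmn (lt_add_one m)
  have ha : ∀ t, z t = D (m - 1) ↔ Occurs w x (q t - (m - 1)) := fun t =>
    relabel_eq_pred_iff hxdisj (hXD x hx) hD hm (by omega) hmn
  have hz : ∀ t, z t = D (m - 1) ↔ z (t + 1) = D m := fun t => by
    rw [ha, he]
    exact hq.occurs_iff_occurs_succ hxdisj hm hmn t
  obtain ⟨p, hp0, hpstep, hprange⟩ := exists_walk_range_eq_setOf_ne (hD.ne (by omega)) hz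
  have hpkept : ∀ k, ¬ Occurs w x (q (p k) - m) := fun k =>
    (he _).not.1 (hprange.subset ⟨k, rfl⟩)
  refine ⟨z ∘ p, ⟨x, hx, q ∘ p, ⟨fun k => ?_, fun i hi => ?_⟩, funext fun k => ?_⟩,
    p, hp0, hpstep, fun k => rfl, fun k hk => (hz _).1 hk⟩
  · simp only [Function.comp_apply]
    by_cases h : Occurs w x (q (p k) - (m - 1))
    · rw [hpstep, if_pos ((ha _).2 h), if_pos h, show p k + 2 = p k + 1 + 1 by ring,
        hq.succ_step_of_occurs ((hq.occurs_iff_occurs_succ hxdisj hm hmn _).1 h),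
        hq.succ_step_of_not_occurs (hpkept k)]
      ring
    · rw [hpstep, if_neg ((ha _).not.2 h), if_neg h, hq.succ_step_of_not_occurs (hpkept k)]
  · obtain ⟨t, rfl⟩ := hq.hits i hi
    obtain ⟨k, rfl⟩ : t ∈ Set.range p := hprange.symm.subset fun h => by
      have := hxdisj.eq hi ((he t).1 h) (by omega) (by omega); omega
    exact ⟨k, rfl⟩
  · exact relabel_succ (hpkept k)

lemma blockReplace_succ (hXdisj : ∀ x ∈ X, OccursDisjointly w x)
    (hXD : ∀ x ∈ X, ∀ i k, x i ≠ D k) (hD : Function.Injective D) (hm : 1 ≤ m)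
    (hmn : m < w.length) :
    blockReplace X w D (m + 1) = symbolExpansion (blockReplace X w D m) (D (m - 1)) (D m) :=
  (blockReplace_succ_subset hXdisj hXD hD hm hmn).antisymm
    (symbolExpansion_blockReplace_subset hXdisj hXD hD hm hmn)

end Expansion

section Conjugacy

variable {A : Set ℕ} {X : Set Seq} {w : List ℕ} {D : ℕ → ℕ}

lemma blockReplace_length_eq_image (hX : IsSubshift A X) :
    blockReplace X w D w.length = relabel w D w.length '' X := by
  ext y
  constructor
  · rintro ⟨x, hx, q, hq, rfl⟩
    have hq1 : ∀ j, q (j + 1) = q j + 1 := fun j => by rw [hq.step]; split_ifs <;> ring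
    have hq : ∀ j, q j = j + q 0 := fun j => by
      induction j using Int.induction_on with
      | zero => simp
      | succ j ih => rw [hq1, ih]; ring
      | pred j ih => have := hq1 (-j - 1); rw [sub_add_cancel] at this; omega
    exact ⟨_, hX.shiftBy_mem hx (q 0), funext fun j => by simp [relabel_shiftBy, hq j]⟩
  · rintro ⟨x, hx, rfl⟩
    exact ⟨x, hx, id, ⟨fun j => by simp, fun i _ => ⟨i, rfl⟩⟩, rfl⟩

lemma conjugate_blockReplace_length (hX : IsSubshift A X)
    (hXdisj : ∀ x ∈ X, OccursDisjointly w x) (hXD : ∀ x ∈ X, ∀ i k, x i ≠ D k)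
    (hD : Function.Injective D) : Conjugate X (blockReplace X w D w.length) := by
  rw [blockReplace_length_eq_image hX]
  exact conjugate_image (ψ := fun y i => unlabel w D (y i)) continuous_relabel
    (continuous_pi fun i => (continuous_of_discreteTopology (f := unlabel w D)).comp
      (continuous_apply i))
    (fun x hx => funext (unlabel_relabel (hXdisj x hx) (hXD x hx) hD))
    (fun x => funext fun i => relabel_shiftBy 1)

end Conjugacy

lemma wordReplace_eq_blockReplace_one {X : Set Seq} {w : List ℕ} {D : ℕ → ℕ} {d : ℕ}
    (hD0 : D 0 = d) : wordReplace X w d = blockReplace X w D 1 := by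
  have hstep : ∀ (x : Seq) (q : ℤ → ℤ) j,
      (if Occurs w x (q j - ((1 : ℕ) - 1)) then (w.length : ℤ) - (1 : ℕ) + 1 else 1) =
        if Occurs w x (q j) then (w.length : ℤ) else 1 := by
    simp
  ext y
  constructor
  · rintro ⟨x, hx, q, hq, hy, hhits⟩
    exact ⟨x, hx, q, ⟨fun j => by rw [hq, hstep], hhits⟩,
      funext fun j => by rw [hy, Function.comp_apply, relabel_one, hD0]⟩
  · rintro ⟨x, hx, q, ⟨hq, hhits⟩, rfl⟩
    exact ⟨x, hx, q, fun j => by rw [hq, hstep],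
      fun j => by rw [Function.comp_apply, relabel_one, hD0], hhits⟩

lemma exists_injective_notMem {A : Set ℕ} (hA : A.Finite) {d : ℕ} (hd : d ∉ A) :
    ∃ D : ℕ → ℕ, Function.Injective D ∧ D 0 = d ∧ ∀ k, D k ∉ A := by
  obtain ⟨N, hN⟩ := (hA.insert d).bddAbove
  have hdN : d ≤ N := hN (Set.mem_insert d A)
  refine ⟨fun k => if k = 0 then d else N + k, fun k k' h => ?_, if_pos rfl, fun k hk => ?_⟩
  · simp only at h
    split_ifs at h <;> omega
  · simp only at hk
    split_ifs at hk with h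
    · exact hd hk
    · have := hN (Set.mem_insert_of_mem d hk); omega

lemma flowEquiv_blockReplace {A : Set ℕ} {X : Set Seq} {w : List ℕ} {D : ℕ → ℕ}
    (hX : IsSubshift A X) (hXdisj : ∀ x ∈ X, OccursDisjointly w x) (hD : Function.Injective D)
    (hDA : ∀ k, D k ∉ A) {m : ℕ} (hm : 1 ≤ m) (hmn : m ≤ w.length) :
    FlowEquiv X (blockReplace X w D m) := by
  have hXD : ∀ x ∈ X, ∀ i k, x i ≠ D k := fun x hx i k h => hDA k (h ▸ hX.2.2.2 x hx i)
  induction hmn using Nat.decreasingInduction with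
  | self =>
    exact .of_conjugate ⟨A, hX⟩ ⟨_, isSubshift_blockReplace hX hm le_rfl⟩
      (conjugate_blockReplace_length hX hXdisj hXD hD)
  | of_succ m hmn ih =>
    refine (ih (by omega)).trans ?_
    rw [blockReplace_succ hXdisj hXD hD hm hmn]
    refine (FlowEquiv.expand _ _ (isSubshift_blockReplace hX hm hmn.le) ?_ ?_).symm
    · exact Or.inr ⟨m - 1, by simp; omega, rfl⟩
    · rintro (h | ⟨k, hk, h⟩)
      · exact hDA m h
      · exact (Set.mem_Iio.1 hk).ne (hD h)

theorem statement2_general (A : Set ℕ) (X : Set Seq) (hX : IsSubshift A X)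
    (w : List ℕ) (hwne : w ≠ [])
    (hov : ∀ v ∈ lang X, IsOverlap w v → v = w)
    (d : ℕ) (hd : d ∉ A) :
    FlowEquiv X (wordReplace X w d) := by
  obtain ⟨D, hD, hD0, hDA⟩ := exists_injective_notMem hX.1 hd
  rw [wordReplace_eq_blockReplace_one hD0]
  exact flowEquiv_blockReplace hX (fun x hx => occursDisjointly_of_forall_isOverlap hov hx) hD hDA
    le_rfl (List.length_pos_iff.2 hwne)

/-- If `X` is a shift space over a finite alphabet `A`,
`w ∈ B(X)` is a (nonempty) word such that `X` admits no non-trivial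
`w`-overlaps, and `◇ = d` is a new symbol, then `X` is flow equivalent to
`X^{w ↦ ◇}`. -/
theorem statement2 (A : Set ℕ) (X : Set Seq) (hX : IsSubshift A X)
    (w : List ℕ) (hw : w ∈ lang X) (hwne : w ≠ [])
    (hov : ∀ v ∈ lang X, IsOverlap w v → v = w)
    (d : ℕ) (hd : d ∉ A) :
    FlowEquiv X (wordReplace X w d) :=
  statement2_general A X hX w hwne hov d hd

end SymbolicDynamics
end

section
/- Let X be a sofic shift. Then X satisfies Condition (∗) if and only if the left Krieger cover of X is the maximal essential subgraph of the past set cover of X; equivalently, the set of vertices of the maximal essential subgraph of the past set cover of X equals {P∞(x⁺) : x⁺ ∈ X⁺}, the vertex set of the left Krieger cover. -/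
namespace SymbolicDynamics

/-! ### Labelled graphs and sofic shifts -/

/-- A labelled directed graph over the ambient alphabet `ℕ`. -/
structure LGraph where
  V : Type
  E : Type
  src : E → V
  tgt : E → V
  lab : E → ℕ

namespace LGraph

/-- Biinfinite edge paths in `G`. -/
def paths (G : LGraph) : Set (ℤ → G.E) := {e | ∀ i : ℤ, G.tgt (e i) = G.src (e (i + 1))}

/-- The label sequence of a biinfinite edge path. -/
def labelMap (G : LGraph) (e : ℤ → G.E) : Seq := fun i => G.lab (e i)

/-- The shift space presented by the labelled graph `G`: label sequences of
biinfinite edge paths. -/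
def presents (G : LGraph) : Set Seq := {y | ∃ e ∈ G.paths, G.labelMap e = y}

/-- No vertex emits two distinct edges with the same label. -/
def RightResolving (G : LGraph) : Prop :=
  ∀ e f : G.E, G.src e = G.src f → G.lab e = G.lab f → e = f

/-- The graph is strongly connected (irreducible). -/
def StronglyConnected (G : LGraph) : Prop :=
  ∀ u v : G.V, Relation.ReflTransGen (fun a b => ∃ e : G.E, G.src e = a ∧ G.tgt e = b) u v

/-- The follower set of a vertex: label sequences of right-infinite paths
starting at that vertex. -/
def follower (G : LGraph) (v : G.V) : Set (ℕ → ℕ) :=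
  {y | ∃ e : ℕ → G.E, G.src (e 0) = v ∧ (∀ i : ℕ, G.tgt (e i) = G.src (e (i + 1))) ∧
    ∀ i : ℕ, y i = G.lab (e i)}

/-- Distinct vertices have distinct follower sets. -/
def FollowerSeparated (G : LGraph) : Prop :=
  ∀ u v : G.V, G.follower u = G.follower v → u = v

end LGraph

/-- A shift space is sofic iff it is presented by some finite labelled graph. -/
def IsSofic (X : Set Seq) : Prop :=
  ∃ G : LGraph, Finite G.V ∧ Finite G.E ∧ G.presents = X

/-! ### Rays and predecessor sets -/

/-- Right rays of `X`, encoded as `u : ℕ → ℕ` with `u k = x_k`. -/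
def rayPlus (X : Set Seq) : Set (ℕ → ℕ) := {u | ∃ x ∈ X, ∀ k : ℕ, x (k : ℤ) = u k}

/-- Left rays of `X`, encoded as `u : ℕ → ℕ` with `u k = x_{-(k+1)}`. -/
def rayMinus (X : Set Seq) : Set (ℕ → ℕ) :=
  {u | ∃ x ∈ X, ∀ k : ℕ, x (-((k : ℤ) + 1)) = u k}

/-- The biinfinite sequence `y⁻ x⁺` obtained by gluing a left ray `u` and a
right ray `v` at the origin. -/
def glue (u v : ℕ → ℕ) : Seq := fun i => if 0 ≤ i then v i.toNat else u (-(i + 1)).toNat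

/-- The predecessor set `P∞(x⁺) = {y⁻ ∈ X⁻ : y⁻ x⁺ ∈ X}` of a right ray. -/
def predInf (X : Set Seq) (v : ℕ → ℕ) : Set (ℕ → ℕ) := {u | glue u v ∈ X}

/-- The left ray `y⁻ w` obtained by appending the word `w` to the left ray `u`. -/
def snocWord (u : ℕ → ℕ) (w : List ℕ) : ℕ → ℕ := fun k =>
  if h : k < w.length then w.get ⟨w.length - 1 - k, by omega⟩ else u (k - w.length)

/-- The predecessor set `P∞(w) = {y⁻ ∈ X⁻ : y⁻ w ∈ X⁻}` of a word. -/
def predWord (X : Set Seq) (w : List ℕ) : Set (ℕ → ℕ) := {u | snocWord u w ∈ rayMinus X}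

/-- The right ray `v x⁺` obtained by prepending the word `v` to the right ray `u`. -/
def consRay (v : List ℕ) (u : ℕ → ℕ) : ℕ → ℕ := fun k =>
  if h : k < v.length then v.get ⟨k, h⟩ else u (k - v.length)

/-- `P_l(w)`: words `v` of length at most `l` with `v w ∈ B(X)`. -/
def predLWord (X : Set Seq) (l : ℕ) (w : List ℕ) : Set (List ℕ) :=
  {v | v ∈ lang X ∧ v.length ≤ l ∧ v ++ w ∈ lang X}

/-- `P_l(x⁺)`: words `v` of length at most `l` with `v x⁺ ∈ X⁺`. -/
def predLRay (X : Set Seq) (l : ℕ) (u : ℕ → ℕ) : Set (List ℕ) :=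
  {v | v ∈ lang X ∧ v.length ≤ l ∧ consRay v u ∈ rayPlus X}

/-- The edge relation of the past set cover of `X`: an edge labelled `a` from
`P` to `P'` whenever there is a nonempty word `w ∈ B(X)` with `a w ∈ B(X)`,
`P = P∞(a w)` and `P' = P∞(w)`. -/
def pscEdge (X : Set Seq) (P P' : Set (ℕ → ℕ)) : Prop :=
  ∃ (a : ℕ) (w : List ℕ), w ≠ [] ∧ w ∈ lang X ∧ (a :: w) ∈ lang X ∧
    P = predWord X (a :: w) ∧ P' = predWord X w

/-- The vertex set of the maximal essential subgraph of the past set cover: the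
vertices lying on a biinfinite path in the past set cover. -/
def pscEssential (X : Set Seq) : Set (Set (ℕ → ℕ)) :=
  {P | ∃ Q : ℤ → Set (ℕ → ℕ), Q 0 = P ∧ ∀ i : ℤ, pscEdge X (Q i) (Q (i + 1))}

/-- Condition (∗) of Carlsen and Matsumoto. -/
def ConditionStar (X : Set Seq) : Prop :=
  ∀ (l : ℕ) (F : Set (List ℕ)), F.Infinite → F ⊆ lang X →
    (∀ u ∈ F, ∀ v ∈ F, predLWord X l u = predLWord X l v) →
    ∃ u ∈ rayPlus X, ∀ w ∈ F, predLWord X l w = predLRay X l u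

/-!
The argument works for any shift space with finitely many predecessor sets `P∞(w)`, and a sofic
shift is one: `P∞(w)` only depends on the set of vertices of a presenting graph from which a path
reads `w`. By compactness, rays and predecessor sets are determined by finite words; hence
`P∞(x⁺) = P∞(x₀ ⋯ x_{m-1})` for large `m`, and `P_L(w)` determines `P∞(w)` for one large `L`.

The first fact makes every `P∞(x⁺)` a vertex on the biinfinite path of the past set cover read
along a point of `X`. Conversely, for a vertex `Q₀` on a biinfinite path, the labels of longer and
longer initial segments of the path give words `W n` of unbounded length with `P∞(W n) = Q₀`;
Condition (∗) yields `x⁺` with `P_L(W n) = P_L(x⁺)`, so `Q₀ = P∞(x⁺)`. For the converse, an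
infinite family `F` with a common `P_l` has infinitely many members with the same `P∞(w)`, and by
König's lemma this vertex lies on a biinfinite path; it is thus some `P∞(x⁺)`, and
`P_l(w) = P_l(x⁺)` on `F`.
-/

end SymbolicDynamics

section Sequences

open Set

variable {α β : Type*}

lemma Antitone.exists_forall_ge_eq_iInter {f : ℕ → Set α} (hf : Antitone f)
    (hfin : (range f).Finite) : ∃ M, ∀ m ≥ M, f m = ⋂ n, f n := by
  obtain ⟨_, ⟨M, rfl⟩, hM⟩ := hfin.exists_minimal (range_nonempty f)
  have hconst (m : ℕ) (hm : M ≤ m) : f m = f M := (hf hm).antisymm (hM (mem_range_self m) (hf hm))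
  refine ⟨M, fun m hm => (iInter_subset f m).antisymm' (subset_iInter fun n => ?_)⟩
  rw [hconst m hm, ← hconst (max M n) (le_max_left M n)]
  exact hf (le_max_right M n)

lemma Set.Infinite.exists_infinite_fiber {s : Set α} (hs : s.Infinite) {f : α → β}
    (hf : (f '' s).Finite) : ∃ b, (s ∩ f ⁻¹' {b}).Infinite := by
  by_contra! h
  exact hs (Finite.of_finite_fibers f hf fun b _ => h b)

lemma exists_seq_of_forall_exists {r : α → α → Prop} {p : α → Prop}
    (h : ∀ a, p a → ∃ b, p b ∧ r a b) {a : α} (ha : p a) :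
    ∃ c : ℕ → α, c 0 = a ∧ ∀ k, r (c k) (c (k + 1)) := by
  choose f hfp hfr using h
  let g : Subtype p → Subtype p := fun x => ⟨f x.1 x.2, hfp x.1 x.2⟩
  refine ⟨fun k => (g^[k] ⟨a, ha⟩).1, rfl, fun k => ?_⟩
  dsimp only
  rw [Function.iterate_succ_apply']
  exact hfr _ _

-- König's lemma
lemma exists_seq_of_forall_exists_chain {r : α → α → Prop} {S : Set α} (hS : S.Finite)
    (hr : ∀ a b, r a b → b ∈ S) {a : α}
    (h : ∀ n, ∃ c : ℕ → α, c 0 = a ∧ ∀ k < n, r (c k) (c (k + 1))) :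
    ∃ c : ℕ → α, c 0 = a ∧ ∀ k, r (c k) (c (k + 1)) := by
  refine exists_seq_of_forall_exists
    (p := fun a => ∀ n, ∃ c : ℕ → α, c 0 = a ∧ ∀ k < n, r (c k) (c (k + 1))) (fun a ha => ?_) h
  choose c hc0 hc using ha
  have hstep (n : ℕ) : r a (c (n + 1) 1) := by simpa [hc0] using hc (n + 1) 0 (by omega)
  obtain ⟨b, hb⟩ := infinite_univ.exists_infinite_fiber (f := fun n => c (n + 1) 1)
    (hS.subset (by rintro _ ⟨n, -, rfl⟩; exact hr _ _ (hstep n)))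
  obtain ⟨n₀, -, hn₀⟩ := hb.nonempty
  refine ⟨b, fun n => ?_, hn₀ ▸ hstep n₀⟩
  obtain ⟨m, ⟨-, hm⟩, hnm⟩ := hb.exists_gt n
  exact ⟨fun k => c (m + 1) (k + 1), hm, fun k hk => hc _ _ (by omega)⟩

lemma exists_int_seq_of_nat_seqs {r : α → α → Prop} {a : α} {f g : ℕ → α}
    (hf0 : f 0 = a) (hf : ∀ k, r (f k) (f (k + 1)))
    (hg0 : g 0 = a) (hg : ∀ k, r (g (k + 1)) (g k)) :
    ∃ c : ℤ → α, c 0 = a ∧ ∀ i, r (c i) (c (i + 1)) := by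
  refine ⟨fun i => if 0 ≤ i then f i.toNat else g (-i).toNat, by simp [hf0], fun i => ?_⟩
  dsimp only
  rcases lt_trichotomy i (-1) with hi | rfl | hi
  · rw [if_neg (by omega), if_neg (by omega)]
    convert hg (-(i + 1)).toNat using 2
    omega
  · simpa [hf0, hg0] using hg 0
  · rw [if_pos (by omega), if_pos (by omega)]
    convert hf i.toNat using 2
    omega

end Sequences

namespace SymbolicDynamics

open Set

section Words

def lword (u : ℕ → ℕ) (n : ℕ) : List ℕ := List.ofFn fun k : Fin n => u (n - 1 - k)

def rword (v : ℕ → ℕ) (n : ℕ) : List ℕ := List.ofFn fun k : Fin n => v k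

@[simp] lemma length_lword (u : ℕ → ℕ) (n : ℕ) : (lword u n).length = n := List.length_ofFn

@[simp] lemma length_rword (v : ℕ → ℕ) (n : ℕ) : (rword v n).length = n := List.length_ofFn

@[simp] lemma length_wordAt (x : Seq) (i : ℤ) (n : ℕ) : (wordAt x i n).length = n :=
  List.length_ofFn

@[simp] lemma getElem_lword (u : ℕ → ℕ) (n k : ℕ) (hk : k < (lword u n).length) :
    (lword u n)[k] = u (n - 1 - k) := by
  simp [lword]

@[simp] lemma getElem_rword (v : ℕ → ℕ) (n k : ℕ) (hk : k < (rword v n).length) :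
    (rword v n)[k] = v k := by
  simp [rword]

@[simp] lemma getElem_wordAt (x : Seq) (i : ℤ) (n k : ℕ) (hk : k < (wordAt x i n).length) :
    (wordAt x i n)[k] = x (i + k) := by
  simp [wordAt]

lemma wordAt_eq_rword (x : Seq) (i : ℤ) (n : ℕ) :
    wordAt x i n = rword (fun k => x (i + k)) n := rfl

lemma rword_add (v : ℕ → ℕ) (m k : ℕ) :
    rword v (m + k) = rword v m ++ rword (fun i => v (m + i)) k := by
  apply List.ext_getElem (by simp)
  intro j h₁ h₂
  simp only [getElem_rword, List.getElem_append]
  split_ifs <;> simp_all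

lemma rword_succ (v : ℕ → ℕ) (m : ℕ) : rword v (m + 1) = v 0 :: rword (fun k => v (k + 1)) m :=
  List.ofFn_succ

lemma rword_succ' (v : ℕ → ℕ) (m : ℕ) : rword v (m + 1) = rword v m ++ [v m] := by
  rw [rword, List.ofFn_succ', List.concat_eq_append]
  rfl

lemma glue_natCast (u v : ℕ → ℕ) (k : ℕ) : glue u v k = v k := by
  simp [glue]

lemma glue_neg_succ (u v : ℕ → ℕ) (k : ℕ) : glue u v (-(k + 1)) = u k := by
  simp only [glue]
  rw [if_neg (by omega)]
  congr
  omega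

lemma wordAt_glue (u v : ℕ → ℕ) (n m : ℕ) :
    wordAt (glue u v) (-n) (n + m) = lword u n ++ rword v m := by
  apply List.ext_getElem (by simp)
  intro k h₁ h₂
  simp only [getElem_wordAt, List.getElem_append, length_lword, getElem_lword, getElem_rword]
  split_ifs with hk
  · rw [show -(n : ℤ) + k = -((n - 1 - k : ℕ) + 1) by omega, glue_neg_succ]
  · rw [show -(n : ℤ) + k = (k - n : ℕ) by omega, glue_natCast]

lemma snocWord_lword (u : ℕ → ℕ) (n : ℕ) : snocWord (fun k => u (k + n)) (lword u n) = u := by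
  funext k
  simp only [snocWord, lword, List.length_ofFn, List.get_eq_getElem, List.getElem_ofFn]
  split_ifs <;> congr 1 <;> omega

lemma wordAt_glue_left (u v : ℕ → ℕ) (n : ℕ) : wordAt (glue u v) (-n) n = lword u n := by
  simpa [rword] using wordAt_glue u v n 0

lemma snocWord_append (y : ℕ → ℕ) (g w : List ℕ) :
    snocWord (snocWord y g) w = snocWord y (g ++ w) := by
  funext k
  simp only [snocWord, List.length_append, List.get_eq_getElem, List.getElem_append]
  split_ifs <;> first | omega | (congr 1; omega)

lemma lword_snocWord (y : ℕ → ℕ) (w : List ℕ) (n : ℕ) :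
    lword (snocWord y w) (n + w.length) = lword y n ++ w := by
  apply List.ext_getElem (by simp)
  intro k h₁ h₂
  simp only [length_lword] at h₁
  simp only [getElem_lword, List.getElem_append, length_lword, snocWord, List.get_eq_getElem]
  split_ifs <;> first | omega | (congr 1; omega)

lemma lword_snocWord_of_le (y : ℕ → ℕ) {w : List ℕ} {n : ℕ} (hn : n ≤ w.length) :
    lword (snocWord y w) n = w.drop (w.length - n) := by
  apply List.ext_getElem (by simp; omega)
  intro k h₁ h₂
  simp only [length_lword] at h₁
  simp only [getElem_lword, List.getElem_drop, snocWord, List.get_eq_getElem]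
  split_ifs <;> first | omega | (congr 1; omega)

lemma glue_snocWord (y v : ℕ → ℕ) (g : List ℕ) :
    glue (snocWord y g) v = fun i => glue y (consRay g v) (i + g.length) := by
  funext i
  simp only [glue, snocWord, consRay, List.get_eq_getElem]
  split_ifs <;> first | omega | (congr 1; omega)

end Words

section Language

variable {X : Set Seq}

lemma wordAt_add (x : Seq) (i : ℤ) (n m : ℕ) :
    wordAt x i (n + m) = wordAt x i n ++ wordAt x (i + n) m := by
  simp only [wordAt_eq_rword, rword_add, add_assoc, Nat.cast_add]

lemma wordAt_eq_wordAt_iff {x y : Seq} {i : ℤ} {n : ℕ} :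
    wordAt x i n = wordAt y i n ↔ ∀ j ∈ Ico i (i + n), x j = y j := by
  simp only [wordAt, List.ofFn_inj, funext_iff, Fin.forall_iff, mem_Ico]
  refine ⟨fun h j hj => ?_, fun h k hk => h _ ⟨by omega, by omega⟩⟩
  convert h (j - i).toNat (by omega) using 2 <;> omega

lemma wordAt_mem_lang {x : Seq} (hx : x ∈ X) (i : ℤ) (n : ℕ) : wordAt x i n ∈ lang X :=
  ⟨x, hx, i, by rw [length_wordAt]⟩

lemma mem_lang_of_append {u v : List ℕ} (h : u ++ v ∈ lang X) : u ∈ lang X ∧ v ∈ lang X := by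
  obtain ⟨x, hx, i, hw⟩ := h
  rw [List.length_append, wordAt_add] at hw
  obtain ⟨hu, hv⟩ := List.append_inj hw (by simp)
  rw [← hu, ← hv]
  exact ⟨wordAt_mem_lang hx _ _, wordAt_mem_lang hx _ _⟩

lemma drop_mem_lang {w : List ℕ} (hw : w ∈ lang X) (k : ℕ) : w.drop k ∈ lang X :=
  (mem_lang_of_append (by rwa [List.take_append_drop])).2

namespace IsShiftSpace

lemma isClosed (hX : IsShiftSpace X) : IsClosed X := hX.choose_spec.2.1

lemma isCompact (hX : IsShiftSpace X) : IsCompact X := by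
  obtain ⟨A, hA, hcl, -, hlet⟩ := hX
  exact (isCompact_univ_pi fun _ => hA.isCompact).of_isClosed_subset hcl
    fun x hx i _ => hlet x hx i

lemma comp_add_mem (hX : IsShiftSpace X) {x : Seq} (hx : x ∈ X) (d : ℤ) :
    (fun i => x (i + d)) ∈ X := by
  obtain ⟨-, -, -, hshift, -⟩ := hX
  induction d using Int.induction_on with
  | zero => simpa using hx
  | succ d ih =>
    convert (hshift _).1 ih using 1
    ext i
    simp only [shift]
    ring_nf
  | pred d ih =>
    refine (hshift _).2 ?_
    convert ih using 1
    ext i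
    simp only [shift]
    ring_nf

lemma comp_add_mem_iff (hX : IsShiftSpace X) (x : Seq) (d : ℤ) :
    (fun i => x (i + d)) ∈ X ↔ x ∈ X :=
  ⟨fun h => by simpa using hX.comp_add_mem h (-d), fun h => hX.comp_add_mem h d⟩

lemma exists_wordAt_eq (hX : IsShiftSpace X) {w : List ℕ} (hw : w ∈ lang X) (j : ℤ) :
    ∃ x ∈ X, wordAt x j w.length = w := by
  obtain ⟨x, hx, i, hxw⟩ := hw
  refine ⟨_, hX.comp_add_mem hx (i - j), ?_⟩
  simpa [wordAt, add_right_comm] using hxw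

lemma exists_cons_mem_lang (hX : IsShiftSpace X) {w : List ℕ} (hw : w ∈ lang X) :
    ∃ a, a :: w ∈ lang X := by
  obtain ⟨x, hx, hxw⟩ := hX.exists_wordAt_eq hw 0
  refine ⟨x (-1), ?_⟩
  have hsplit := wordAt_add x (-1) 1 w.length
  rw [Nat.cast_one, neg_add_cancel, hxw, show wordAt x (-1) 1 = [x (-1)] by simp [wordAt]]
    at hsplit
  rw [← List.singleton_append, ← hsplit]
  exact wordAt_mem_lang hx _ _

lemma finite_lang_length_le (hX : IsShiftSpace X) (n : ℕ) :
    {w | w ∈ lang X ∧ w.length ≤ n}.Finite := by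
  obtain ⟨A, hA, -, -, hlet⟩ := hX
  have : Finite A := hA
  refine ((List.finite_length_le A n).image (List.map Subtype.val)).subset ?_
  rintro w ⟨⟨x, hx, i, hxw⟩, hlen⟩
  have hwA : ∀ c ∈ w, c ∈ A := by
    rw [← hxw]
    simp only [wordAt, List.mem_ofFn]
    rintro c ⟨k, rfl⟩
    exact hlet x hx _
  lift w to List A using hwA
  exact ⟨w, by simpa using hlen, rfl⟩

lemma exists_mem_length_ge (hX : IsShiftSpace X) {F : Set (List ℕ)} (hF : F.Infinite)
    (hFX : F ⊆ lang X) (n : ℕ) : ∃ w ∈ F, n ≤ w.length := by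
  by_contra! h
  exact hF ((hX.finite_lang_length_le n).subset fun w hw => ⟨hFX hw, (h w hw).le⟩)

lemma exists_mem_eqOn (hX : IsShiftSpace X) {y : Seq} {I : Set ℤ}
    (h : ∀ N : ℕ, ∃ x ∈ X, EqOn x y (I ∩ {i | i.natAbs ≤ N})) : ∃ x ∈ X, EqOn x y I := by
  have hclosed (N : ℕ) : IsClosed {x : Seq | EqOn x y (I ∩ {i | i.natAbs ≤ N})} := by
    simp only [EqOn, ofPred_forall]
    exact isClosed_biInter fun i _ => isClosed_eq (continuous_apply i) continuous_const
  obtain ⟨x, hx⟩ := IsCompact.nonempty_iInter_of_sequence_nonempty_isCompact_isClosed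
    (fun N => X ∩ {x | EqOn x y (I ∩ {i | i.natAbs ≤ N})})
    (fun N => inter_subset_inter_right _ fun x hx i hi => hx ⟨hi.1, hi.2.trans N.le_succ⟩)
    h (hX.isCompact.inter_right (hclosed 0)) (fun N => hX.isClosed.inter (hclosed N))
  simp only [mem_iInter] at hx
  exact ⟨x, (hx 0).1, fun i hi => (hx i.natAbs).2 ⟨hi, mem_ofPred.2 le_rfl⟩⟩

lemma exists_mem_eqOn_of_wordAt_mem_lang (hX : IsShiftSpace X) {y : Seq} {I : Set ℤ}
    (h : ∀ N : ℕ, ∃ (i : ℤ) (n : ℕ),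
      I ∩ {j | j.natAbs ≤ N} ⊆ Ico i (i + n) ∧ wordAt y i n ∈ lang X) :
    ∃ x ∈ X, EqOn x y I := by
  refine hX.exists_mem_eqOn fun N => ?_
  obtain ⟨i, n, hsub, hy⟩ := h N
  obtain ⟨x, hx, hxy⟩ := hX.exists_wordAt_eq hy i
  rw [length_wordAt, wordAt_eq_wordAt_iff] at hxy
  exact ⟨x, hx, fun j hj => hxy j (hsub hj)⟩

end IsShiftSpace

end Language

section Rays

variable {X : Set Seq}

lemma exists_glue_eq (x : Seq) : ∃ u v, glue u v = x := by
  refine ⟨fun k => x (-(k + 1)), fun k => x k, funext fun i => ?_⟩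
  simp only [glue]
  split_ifs <;> congr 1 <;> omega

lemma mem_rayMinus_iff_glue {u : ℕ → ℕ} : u ∈ rayMinus X ↔ ∃ v, glue u v ∈ X := by
  constructor
  · rintro ⟨x, hx, hxu⟩
    obtain ⟨u', v, rfl⟩ := exists_glue_eq x
    obtain rfl : u' = u := funext fun k => by rw [← hxu, glue_neg_succ]
    exact ⟨v, hx⟩
  · rintro ⟨v, hv⟩
    exact ⟨_, hv, glue_neg_succ u v⟩

lemma mem_rayPlus_iff_glue {v : ℕ → ℕ} : v ∈ rayPlus X ↔ ∃ u, glue u v ∈ X := by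
  constructor
  · rintro ⟨x, hx, hxv⟩
    obtain ⟨u, v', rfl⟩ := exists_glue_eq x
    obtain rfl : v' = v := funext fun k => by rw [← hxv, glue_natCast]
    exact ⟨u, hx⟩
  · rintro ⟨u, hu⟩
    exact ⟨_, hu, glue_natCast u v⟩

lemma predWord_append (g w : List ℕ) :
    predWord X (g ++ w) = (snocWord · g) ⁻¹' predWord X w := by
  ext y
  simp [predWord, snocWord_append]

lemma lword_mem_predLWord_iff {y : ℕ → ℕ} {n : ℕ} {w : List ℕ} :
    lword y n ∈ predLWord X n w ↔ lword y n ++ w ∈ lang X :=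
  ⟨fun h => h.2.2, fun h => ⟨(mem_lang_of_append h).1, (length_lword y n).le, h⟩⟩

namespace IsShiftSpace

lemma mem_lang_iff_predWord_nonempty (hX : IsShiftSpace X) {w : List ℕ} :
    w ∈ lang X ↔ (predWord X w).Nonempty := by
  constructor
  · intro hw
    obtain ⟨x, hx, hxw⟩ := hX.exists_wordAt_eq hw (-w.length)
    obtain ⟨u, v, rfl⟩ := exists_glue_eq x
    refine ⟨fun k => u (k + w.length), mem_rayMinus_iff_glue.2 ⟨v, ?_⟩⟩
    have hu := snocWord_lword u w.length
    rw [← wordAt_glue_left u v, hxw] at hu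
    rwa [hu]
  · rintro ⟨y, hy⟩
    obtain ⟨v, hv⟩ := mem_rayMinus_iff_glue.1 hy
    have hw := wordAt_mem_lang hv (-w.length) w.length
    rwa [wordAt_glue_left, lword_snocWord_of_le y le_rfl, Nat.sub_self, List.drop_zero] at hw

lemma append_mem_lang_iff (hX : IsShiftSpace X) {g w : List ℕ} :
    g ++ w ∈ lang X ↔ ∃ y, snocWord y g ∈ predWord X w := by
  rw [hX.mem_lang_iff_predWord_nonempty, predWord_append]
  rfl

lemma consRay_mem_rayPlus_iff (hX : IsShiftSpace X) {g : List ℕ} {v : ℕ → ℕ} :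
    consRay g v ∈ rayPlus X ↔ ∃ y, snocWord y g ∈ predInf X v := by
  simp only [mem_rayPlus_iff_glue, predInf, mem_ofPred_eq, glue_snocWord, hX.comp_add_mem_iff]

lemma mem_rayMinus_iff (hX : IsShiftSpace X) {u : ℕ → ℕ} :
    u ∈ rayMinus X ↔ ∀ n, lword u n ∈ lang X := by
  constructor
  · rintro hu n
    obtain ⟨v, hv⟩ := mem_rayMinus_iff_glue.1 hu
    rw [← wordAt_glue_left u v]
    exact wordAt_mem_lang hv _ _
  · intro hu
    obtain ⟨x, hx, hxu⟩ := hX.exists_mem_eqOn_of_wordAt_mem_lang (y := glue u 0) (I := Iio 0)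
      fun N => ⟨-N, N, fun j hj => ⟨by simp at hj; omega, by simp at hj; omega⟩,
        by rw [wordAt_glue_left]; exact hu N⟩
    exact ⟨x, hx, fun k => by rw [hxu (show -((k : ℤ) + 1) < 0 by omega), glue_neg_succ]⟩

lemma mem_predInf_iff (hX : IsShiftSpace X) {y v : ℕ → ℕ} :
    y ∈ predInf X v ↔ ∀ n m, lword y n ++ rword v m ∈ lang X := by
  constructor
  · intro hy n m
    rw [← wordAt_glue]
    exact wordAt_mem_lang hy _ _
  · intro h
    obtain ⟨x, hx, hxy⟩ := hX.exists_mem_eqOn_of_wordAt_mem_lang (y := glue y v) (I := univ)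
      fun N => ⟨-N, N + (N + 1), fun j hj => ⟨by simp at hj; omega, by simp at hj; omega⟩,
        by rw [wordAt_glue]; exact h _ _⟩
    rwa [show x = glue y v from funext fun i => hxy (mem_univ i)] at hx

lemma mem_predWord_iff (hX : IsShiftSpace X) {y : ℕ → ℕ} {w : List ℕ} :
    y ∈ predWord X w ↔ ∀ n, lword y n ++ w ∈ lang X := by
  rw [predWord, mem_ofPred_eq, hX.mem_rayMinus_iff]
  refine ⟨fun h n => by simpa [lword_snocWord] using h (n + w.length), fun h n => ?_⟩
  rcases le_total n w.length with hn | hn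
  · rw [lword_snocWord_of_le y hn]
    exact drop_mem_lang (by simpa [lword] using h 0) _
  · rw [← Nat.sub_add_cancel hn, lword_snocWord]
    exact h _

lemma predInf_eq_iInter (hX : IsShiftSpace X) (v : ℕ → ℕ) :
    predInf X v = ⋂ m, predWord X (rword v m) := by
  ext y
  simp only [hX.mem_predInf_iff, mem_iInter, hX.mem_predWord_iff]
  exact forall_comm

lemma predWord_append_subset (hX : IsShiftSpace X) (u t : List ℕ) :
    predWord X (u ++ t) ⊆ predWord X u := fun y hy => by
  simp only [hX.mem_predWord_iff, ← List.append_assoc] at hy ⊢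
  exact fun n => (mem_lang_of_append (hy n)).1

lemma antitone_predWord_rword (hX : IsShiftSpace X) (v : ℕ → ℕ) :
    Antitone fun m => predWord X (rword v m) := fun m m' h => by
  obtain ⟨k, rfl⟩ := Nat.exists_eq_add_of_le h
  simp only [rword_add]
  exact hX.predWord_append_subset _ _

lemma predLWord_eq_of_predWord_eq (hX : IsShiftSpace X) {w w' : List ℕ}
    (h : predWord X w = predWord X w') (l : ℕ) : predLWord X l w = predLWord X l w' := by
  ext g
  simp only [predLWord, mem_ofPred_eq, hX.append_mem_lang_iff, h]

lemma predLWord_eq_predLRay (hX : IsShiftSpace X) {w : List ℕ} {v : ℕ → ℕ}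
    (h : predWord X w = predInf X v) (l : ℕ) : predLWord X l w = predLRay X l v := by
  ext g
  simp only [predLWord, predLRay, mem_ofPred_eq, hX.append_mem_lang_iff,
    hX.consRay_mem_rayPlus_iff, h]

lemma predWord_eq_of_forall_predLWord_eq (hX : IsShiftSpace X) {w w' : List ℕ}
    (h : ∀ l, predLWord X l w = predLWord X l w') : predWord X w = predWord X w' := by
  ext y
  simp only [hX.mem_predWord_iff, ← lword_mem_predLWord_iff, h]

end IsShiftSpace

end Rays


def leftKriegerVertices (X : Set Seq) : Set (Set (ℕ → ℕ)) :=
  {P | ∃ u ∈ rayPlus X, P = predInf X u}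

section PastSetCover

variable {X : Set Seq}

lemma predWord_append_congr {u u' : List ℕ} (h : predWord X u = predWord X u') (g : List ℕ) :
    predWord X (g ++ u) = predWord X (g ++ u') := by
  rw [predWord_append, h, predWord_append]

lemma predLWord_eq_inter_of_le {l l' : ℕ} (hl : l ≤ l') (w : List ℕ) :
    predLWord X l w = predLWord X l' w ∩ {g | g.length ≤ l} := by
  ext g
  simp only [predLWord, mem_inter_iff, mem_ofPred_eq]
  constructor
  · exact fun ⟨h₁, h₂, h₃⟩ => ⟨⟨h₁, h₂.trans hl, h₃⟩, h₂⟩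
  · exact fun ⟨⟨h₁, _, h₃⟩, h₂⟩ => ⟨h₁, h₂, h₃⟩

lemma pscEdge_predWord_cons {a : ℕ} {w : List ℕ} (hw : w ≠ []) (haw : a :: w ∈ lang X) :
    pscEdge X (predWord X (a :: w)) (predWord X w) :=
  ⟨a, w, hw, (mem_lang_of_append (u := [a]) haw).2, haw, rfl, rfl⟩

lemma pscEdge_predWord_drop {w : List ℕ} (hw : w ∈ lang X) {k : ℕ} (hk : k + 1 < w.length) :
    pscEdge X (predWord X (w.drop k)) (predWord X (w.drop (k + 1))) := by
  have hcons := List.drop_eq_getElem_cons (show k < w.length by omega)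
  rw [hcons]
  exact pscEdge_predWord_cons (by simp; omega) (hcons ▸ drop_mem_lang hw k)

namespace IsShiftSpace

lemma exists_predInf_eq_predWord_rword (hX : IsShiftSpace X)
    (hfin : (range (predWord X)).Finite) (v : ℕ → ℕ) :
    ∃ M, ∀ m ≥ M, predInf X v = predWord X (rword v m) := by
  obtain ⟨M, hM⟩ := (hX.antitone_predWord_rword v).exists_forall_ge_eq_iInter
    (hfin.subset (range_subset_iff.2 fun m => mem_range_self _))
  exact ⟨M, fun m hm => (hX.predInf_eq_iInter v).trans (hM m hm).symm⟩

lemma exists_predWord_eq_of_predLWord_eq (hX : IsShiftSpace X)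
    (hfin : (range (predWord X)).Finite) :
    ∃ L, ∀ w w', predLWord X L w = predLWord X L w' → predWord X w = predWord X w' := by
  -- pairs of predecessor sets not separated by `P_l`: finitely many, and decreasing in `l`
  let R : ℕ → Set (Set (ℕ → ℕ) × Set (ℕ → ℕ)) := fun l =>
    {q | ∃ w w', predWord X w = q.1 ∧ predWord X w' = q.2 ∧ predLWord X l w = predLWord X l w'}
  have hR : Antitone R := by
    rintro l l' hl q ⟨w, w', h₁, h₂, h⟩
    refine ⟨w, w', h₁, h₂, ?_⟩
    rw [predLWord_eq_inter_of_le hl, h, ← predLWord_eq_inter_of_le hl]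
  have hRfin : (range R).Finite := (hfin.prod hfin).finite_subsets.subset <| by
    rintro _ ⟨l, rfl⟩ q ⟨w, w', hw, hw', -⟩
    exact ⟨hw ▸ mem_range_self w, hw' ▸ mem_range_self w'⟩
  obtain ⟨L, hL⟩ := hR.exists_forall_ge_eq_iInter hRfin
  refine ⟨L, fun w w' h => hX.predWord_eq_of_forall_predLWord_eq fun l => ?_⟩
  have hmem : (predWord X w, predWord X w') ∈ R l :=
    iInter_subset R l (hL L le_rfl ▸ ⟨w, w', rfl, rfl, h⟩)
  obtain ⟨v, v', hv, hv', hvv'⟩ := hmem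
  rwa [← hX.predLWord_eq_of_predWord_eq hv, ← hX.predLWord_eq_of_predWord_eq hv']

lemma leftKriegerVertices_subset_pscEssential (hX : IsShiftSpace X)
    (hfin : (range (predWord X)).Finite) : leftKriegerVertices X ⊆ pscEssential X := by
  rintro _ ⟨v, ⟨x, hx, hxv⟩, rfl⟩
  let ray (i : ℤ) : ℕ → ℕ := fun k => x (i + k)
  choose M hM using fun i => hX.exists_predInf_eq_predWord_rword hfin (ray i)
  refine ⟨fun i => predInf X (ray i), by simp only [ray, zero_add, hxv], fun i => ?_⟩
  show pscEdge X (predInf X (ray i)) (predInf X (ray (i + 1)))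
  let m := max (M i) (max (M (i + 1)) 1)
  have hcons : rword (ray i) (m + 1) = x i :: rword (ray (i + 1)) m := by
    rw [rword_succ]
    congr 1
    · simp [ray]
    · congr 1
      funext k
      simp only [ray]
      push_cast
      ring_nf
  rw [hM i (m + 1) (by omega), hcons, hM (i + 1) m (by omega)]
  exact pscEdge_predWord_cons (by simp [rword, m]) (hcons ▸ wordAt_mem_lang hx i (m + 1))

lemma pscEssential_subset_leftKriegerVertices (hX : IsShiftSpace X)
    (hfin : (range (predWord X)).Finite) (hstar : ConditionStar X) :
    pscEssential X ⊆ leftKriegerVertices X := by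
  rintro _ ⟨Q, rfl, hQ⟩
  choose a w _ _ haw hQa hQw using fun k : ℕ => hQ k
  -- the labels of the first `n + 1` edges of the path, followed by a word for `Q (n + 1)`
  let W (n : ℕ) : List ℕ := rword a n ++ (a n :: w n)
  have hW (n : ℕ) : predWord X (W n) = Q 0 := by
    induction n with
    | zero => simpa [W, rword] using (hQa 0).symm
    | succ n ih =>
      have hstep : predWord X (a (n + 1) :: w (n + 1)) = predWord X (w n) := by
        rw [← hQw, ← hQa]
        push_cast
        rfl
      rw [← ih]
      simp only [W, rword_succ', List.append_assoc, List.singleton_append]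
      exact predWord_append_congr (predWord_append_congr (g := [a n]) hstep) _
  have hWlang (n : ℕ) : W n ∈ lang X := by
    rw [hX.mem_lang_iff_predWord_nonempty, hW, show Q 0 = _ from hQa 0]
    exact hX.mem_lang_iff_predWord_nonempty.1 (haw 0)
  have hWinf : (range W).Infinite := by
    refine Infinite.of_image List.length (infinite_of_not_bddAbove ?_)
    rintro ⟨B, hB⟩
    have := hB (mem_image_of_mem _ (mem_range_self (f := W) B))
    simp only [W, List.length_append, length_rword, List.length_cons] at this
    omega
  obtain ⟨L, hL⟩ := hX.exists_predWord_eq_of_predLWord_eq hfin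
  obtain ⟨v, hv, hvW⟩ := hstar L (range W) hWinf (range_subset_iff.2 hWlang) <| by
    rintro _ ⟨n, rfl⟩ _ ⟨n', rfl⟩
    exact hX.predLWord_eq_of_predWord_eq (by rw [hW, hW]) L
  obtain ⟨M, hM⟩ := hX.exists_predInf_eq_predWord_rword hfin v
  refine ⟨v, hv, ?_⟩
  rw [← hW 0, hM M le_rfl]
  exact hL _ _ ((hvW _ (mem_range_self 0)).trans
    (hX.predLWord_eq_predLRay (hM M le_rfl).symm L).symm)

lemma mem_pscEssential_of_infinite (hX : IsShiftSpace X) (hfin : (range (predWord X)).Finite)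
    {P : Set (ℕ → ℕ)} (hP : {w | w ∈ lang X ∧ predWord X w = P}.Infinite) :
    P ∈ pscEssential X := by
  have hlong := hX.exists_mem_length_ge hP fun w hw => hw.1
  obtain ⟨f, hf0, hf⟩ := exists_seq_of_forall_exists_chain (r := pscEdge X) hfin
    (fun _ _ ⟨_, w, _, _, _, _, h⟩ => ⟨w, h.symm⟩) fun n => by
      obtain ⟨w, ⟨hw, hwP⟩, hlen⟩ := hlong (n + 1)
      exact ⟨fun k => predWord X (w.drop k), by simpa using hwP,
        fun k hk => pscEdge_predWord_drop hw (by omega)⟩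
  obtain ⟨w₀, ⟨hw₀, hw₀P⟩, hlen⟩ := hlong 1
  obtain ⟨g, hg0, hg⟩ := exists_seq_of_forall_exists (p := fun w => w ∈ lang X ∧ w ≠ [])
    (r := fun w w' => pscEdge X (predWord X w') (predWord X w))
    (fun w ⟨hw, hne⟩ => by
      obtain ⟨a, ha⟩ := hX.exists_cons_mem_lang hw
      exact ⟨a :: w, ⟨ha, List.cons_ne_nil _ _⟩, pscEdge_predWord_cons hne ha⟩)
    ⟨hw₀, List.ne_nil_of_length_pos hlen⟩
  exact exists_int_seq_of_nat_seqs hf0 hf (g := fun k => predWord X (g k))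
    (by simp [hg0, hw₀P]) hg

lemma conditionStar_of_pscEssential_subset (hX : IsShiftSpace X)
    (hfin : (range (predWord X)).Finite) (h : pscEssential X ⊆ leftKriegerVertices X) :
    ConditionStar X := by
  intro l F hF hFX hFl
  obtain ⟨P, hP⟩ := hF.exists_infinite_fiber (hfin.subset (image_subset_range (predWord X) F))
  obtain ⟨v, hv, rfl⟩ :=
    h (hX.mem_pscEssential_of_infinite hfin (hP.mono fun w hw => ⟨hFX hw.1, hw.2⟩))
  obtain ⟨w₀, hw₀F, hw₀⟩ := hP.nonempty
  exact ⟨v, hv, fun w hw => (hFl w hw w₀ hw₀F).trans (hX.predLWord_eq_predLRay hw₀ l)⟩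

theorem conditionStar_iff_pscEssential_eq (hX : IsShiftSpace X)
    (hfin : (range (predWord X)).Finite) :
    ConditionStar X ↔ pscEssential X = leftKriegerVertices X :=
  ⟨fun hstar => (hX.pscEssential_subset_leftKriegerVertices hfin hstar).antisymm
      (hX.leftKriegerVertices_subset_pscEssential hfin),
    fun h => hX.conditionStar_of_pscEssential_subset hfin h.subset⟩

end IsShiftSpace

end PastSetCover

namespace LGraph

variable (G : LGraph)

lemma comp_add_mem_paths {e : ℤ → G.E} (he : e ∈ G.paths) (d : ℤ) :
    (fun i => e (i + d)) ∈ G.paths := fun i => by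
  simpa [add_right_comm] using he (i + d)

lemma splice_mem_paths {e₁ e₂ : ℤ → G.E} (h₁ : e₁ ∈ G.paths) (h₂ : e₂ ∈ G.paths)
    (h : G.src (e₁ 0) = G.src (e₂ 0)) : (fun i => if i < 0 then e₁ i else e₂ i) ∈ G.paths := by
  intro i
  dsimp only
  split_ifs with hi hi'
  · exact h₁ i
  · obtain rfl : i = -1 := by omega
    simpa [h] using h₁ (-1)
  · omega
  · exact h₂ i

lemma isShiftSpace_presents [Finite G.E] : IsShiftSpace G.presents := by
  let _ : TopologicalSpace G.E := ⊥
  have _ : DiscreteTopology G.E := ⟨rfl⟩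
  let _ : TopologicalSpace G.V := ⊥
  have _ : DiscreteTopology G.V := ⟨rfl⟩
  have hpaths : IsClosed G.paths := by
    simp only [paths, ofPred_forall]
    exact isClosed_iInter fun i =>
      isClosed_eq (continuous_of_discreteTopology.comp (continuous_apply i))
        (continuous_of_discreteTopology.comp (continuous_apply (i + 1)))
  have hlab : Continuous G.labelMap :=
    continuous_pi fun i => continuous_of_discreteTopology.comp (continuous_apply i)
  refine ⟨range G.lab, finite_range _, (hpaths.isCompact.image hlab).isClosed,
    fun x => ⟨?_, ?_⟩, ?_⟩
  · rintro ⟨e, he, rfl⟩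
    exact ⟨_, G.comp_add_mem_paths he 1, rfl⟩
  · rintro ⟨e, he, hx⟩
    refine ⟨_, G.comp_add_mem_paths he (-1), funext fun i => ?_⟩
    simpa [labelMap, shift, ← sub_eq_add_neg] using congrFun hx (i - 1)
  · rintro _ ⟨e, -, rfl⟩ i
    exact mem_range_self _

def wordSources (w : List ℕ) : Set G.V :=
  {v | ∃ e ∈ G.paths, G.src (e 0) = v ∧ wordAt (G.labelMap e) 0 w.length = w}

def leftRaysInto (v : G.V) : Set (ℕ → ℕ) :=
  {y | ∃ e ∈ G.paths, G.src (e 0) = v ∧ ∀ k : ℕ, G.lab (e (-(k + 1))) = y k}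

lemma predWord_presents_subset (w : List ℕ) :
    predWord G.presents w ⊆ ⋃ v ∈ G.wordSources w, G.leftRaysInto v := by
  rintro y ⟨_, ⟨e, he, rfl⟩, hy⟩
  simp only [mem_iUnion, exists_prop]
  refine ⟨_, ⟨_, G.comp_add_mem_paths he (-w.length), rfl, ?_⟩,
    ⟨_, G.comp_add_mem_paths he (-w.length), rfl, fun k => ?_⟩⟩
  · apply List.ext_getElem (by simp)
    intro k hk _
    simp only [length_wordAt] at hk
    have := hy (w.length - 1 - k)
    simp only [snocWord, dif_pos (show w.length - 1 - k < w.length by omega),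
      List.get_eq_getElem, labelMap] at this
    rw [getElem_wordAt, labelMap, show (0 : ℤ) + k + -w.length = -((w.length - 1 - k : ℕ) + 1)
      by omega, this]
    congr 1
    omega
  · have := hy (k + w.length)
    simp only [snocWord, dif_neg (show ¬ k + w.length < w.length by omega),
      Nat.add_sub_cancel] at this
    rw [← this]
    congr 2
    push_cast
    ring

lemma biUnion_leftRaysInto_subset (w : List ℕ) :
    ⋃ v ∈ G.wordSources w, G.leftRaysInto v ⊆ predWord G.presents w := by
  simp only [iUnion_subset_iff]
  rintro _ ⟨e₂, he₂, rfl, hw⟩ y ⟨e₁, he₁, he₁v, hy⟩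
  refine ⟨_, ⟨_, G.comp_add_mem_paths (G.splice_mem_paths he₁ he₂ he₁v) w.length, rfl⟩,
    fun k => ?_⟩
  simp only [labelMap, snocWord]
  split_ifs with hneg hk
  · omega
  · rw [← hy (k - w.length)]
    congr 2
    omega
  · simp only [List.get_eq_getElem, List.getElem_of_eq hw.symm, getElem_wordAt, labelMap]
    congr 2
    omega
  · omega

lemma finite_range_predWord_presents [Finite G.V] : (range (predWord G.presents)).Finite :=
  (finite_range fun S : Set G.V => ⋃ v ∈ S, G.leftRaysInto v).subset <|
    range_subset_iff.2 fun w =>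
      ⟨_, (G.biUnion_leftRaysInto_subset w).antisymm (G.predWord_presents_subset w)⟩

end LGraph

/-- A sofic shift `X` satisfies Condition (∗) if and only if
the left Krieger cover of `X` is the maximal essential subgraph of the past set
cover of `X`; equivalently, the vertex set of the maximal essential subgraph of
the past set cover equals `{P∞(x⁺) : x⁺ ∈ X⁺}`, the vertex set of the left
Krieger cover. -/
theorem statement9 (X : Set Seq) (hX : IsSofic X) :
    ConditionStar X ↔
      pscEssential X = {P | ∃ u ∈ rayPlus X, P = predInf X u} := by
  obtain ⟨G, hV, hE, rfl⟩ := hX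
  exact G.isShiftSpace_presents.conditionStar_iff_pscEssential_eq
    G.finite_range_predWord_presents

end SymbolicDynamics
end
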